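/- arXiv:2404.04034 — 9 statements merged into one kernel-verified Lean document; each statement's English description precedes it below -/
import Mathlib

section
/- Fix a labeling of the infinite rooted ternary tree T_{3,∞} and an integer ℓ ≥ 2. The set Q̃_{ℓ,∞} of all σ ∈ Aut(T_{3,∞}) such that sgn_ℓ(σ,y)·sgn_{ℓ−1}(σ,y) = sgn_ℓ(σ,x_0)·sgn_{ℓ−1}(σ,x_0) for every node y (where x_0 is the root) is a subgroup of Aut(T_{3,∞}). -/
/-!
Nodes of the infinite rooted `d`-ary tree `T_{d,∞}` are identified with their
labels, i.e. finite words over `Fin d`; the node below `s₁…s_m` is `s₁…s_{m-1}`.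
A tree automorphism is a permutation of the nodes preserving levels (word
length) and the descendant relation (list prefix).
-/

namespace Arboreal

/-- The map induced by `σ` on the labels of the `d^n` nodes lying `n` levels
above the node labeled `y` (junk value if the lengths do not work out, which
cannot happen for a tree automorphism). -/
noncomputable def localMap (d n : ℕ) (σ : Equiv.Perm (List (Fin d)))
    (y : List (Fin d)) (w : List.Vector (Fin d) n) : List.Vector (Fin d) n :=
  if h : ((σ (y ++ w.toList)).drop y.length).length = n then
    ⟨(σ (y ++ w.toList)).drop y.length, h⟩ else w

/-- `sgn d n σ y`: the sign of the permutation of the set `{0,…,d-1}^n` of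
labels induced by `σ` on the nodes `n` levels above `y` (by convention `1`
if this map fails to be a bijection). -/
noncomputable def sgn (d n : ℕ) (σ : Equiv.Perm (List (Fin d)))
    (y : List (Fin d)) : ℤˣ :=
  if h : Function.Bijective (localMap d n σ y) then
    Equiv.Perm.sign (Equiv.ofBijective _ h) else 1

/-- A permutation of the set of nodes of `T_{d,∞}` is a tree automorphism iff
it preserves levels and the descendant (prefix) relation. -/
def IsTreeAut (d : ℕ) (σ : Equiv.Perm (List (Fin d))) : Prop :=
  (∀ w, (σ w).length = w.length) ∧
    ∀ w₁ w₂ : List (Fin d), w₁ <+: w₂ → σ w₁ <+: σ w₂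

section CocycleSubgroup

variable {G X A : Type*} [Group G] [MulAction G X] [CommGroup A]
  {K : Subgroup G} {c : G → X → A}

lemma cocycle_one (hc : ∀ g ∈ K, ∀ h ∈ K, ∀ x, c (g * h) x = c g (h • x) * c h x) (x : X) :
    c 1 x = 1 := by
  simpa using hc 1 K.one_mem 1 K.one_mem x

lemma cocycle_inv (hc : ∀ g ∈ K, ∀ h ∈ K, ∀ x, c (g * h) x = c g (h • x) * c h x)
    {g : G} (hg : g ∈ K) (x : X) : c g⁻¹ x = (c g (g⁻¹ • x))⁻¹ := by
  refine eq_inv_of_mul_eq_one_right ?_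
  rw [← hc g hg g⁻¹ (K.inv_mem hg), mul_inv_cancel, cocycle_one hc]

def cocycleConstSubgroup (K : Subgroup G) (c : G → X → A) (x₀ : X)
    (hc : ∀ g ∈ K, ∀ h ∈ K, ∀ x, c (g * h) x = c g (h • x) * c h x)
    (hx₀ : ∀ g ∈ K, g • x₀ = x₀) : Subgroup G where
  carrier := {g | g ∈ K ∧ ∀ x, c g x = c g x₀}
  one_mem' := ⟨K.one_mem, fun x => by rw [cocycle_one hc, cocycle_one hc]⟩
  mul_mem' := by
    rintro g h ⟨hg, hgc⟩ ⟨hh, hhc⟩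
    refine ⟨K.mul_mem hg hh, fun x => ?_⟩
    rw [hc g hg h hh, hc g hg h hh, hgc, hhc, hx₀ h hh]
  inv_mem' := by
    rintro g ⟨hg, hgc⟩
    refine ⟨K.inv_mem hg, fun x => ?_⟩
    rw [cocycle_inv hc hg, cocycle_inv hc hg, hgc, hgc (g⁻¹ • x₀)]

end CocycleSubgroup

section TreeAut

variable {d n : ℕ} {σ τ : Equiv.Perm (List (Fin d))}

lemma IsTreeAut.apply_take (hσ : IsTreeAut d σ) (w : List (Fin d)) (k : ℕ) :
    σ (w.take k) = (σ w).take k := by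
  rw [List.prefix_iff_eq_take.mp (hσ.2 _ _ (w.take_prefix k)), hσ.1, List.length_take,
    ← hσ.1 w, ← List.take_eq_take_min]

lemma IsTreeAut.apply_nil (hσ : IsTreeAut d σ) : σ [] = [] := by
  simpa using hσ.apply_take [] 0

lemma IsTreeAut.apply_append (hσ : IsTreeAut d σ) (y l : List (Fin d)) :
    σ (y ++ l) = σ y ++ (σ (y ++ l)).drop y.length := by
  have hy : σ y = (σ (y ++ l)).take y.length := by rw [← hσ.apply_take, List.take_left]
  rw [hy, List.take_append_drop]

lemma IsTreeAut.mul (hσ : IsTreeAut d σ) (hτ : IsTreeAut d τ) : IsTreeAut d (σ * τ) :=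
  ⟨fun w => by rw [Equiv.Perm.mul_apply, hσ.1, hτ.1], fun _ _ h => hσ.2 _ _ (hτ.2 _ _ h)⟩

lemma IsTreeAut.inv (hσ : IsTreeAut d σ) : IsTreeAut d σ⁻¹ := by
  have hlen (w : List (Fin d)) : (σ⁻¹ w).length = w.length := by
    simpa using (hσ.1 (σ⁻¹ w)).symm
  have htake (w : List (Fin d)) (k : ℕ) : σ⁻¹ (w.take k) = (σ⁻¹ w).take k := by
    rw [Equiv.Perm.inv_eq_iff_eq, hσ.apply_take, Equiv.Perm.coe_inv, Equiv.apply_symm_apply]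
  refine ⟨hlen, fun w₁ w₂ h => ?_⟩
  rw [List.prefix_iff_eq_take.mp h, htake]
  exact List.take_prefix _ _

def treeAut (d : ℕ) : Subgroup (Equiv.Perm (List (Fin d))) where
  carrier := {σ | IsTreeAut d σ}
  one_mem' := ⟨fun _ => rfl, fun _ _ h => h⟩
  mul_mem' := IsTreeAut.mul
  inv_mem' := IsTreeAut.inv

lemma localMap_toList (hσ : IsTreeAut d σ) (y : List (Fin d)) (w : List.Vector (Fin d) n) :
    (localMap d n σ y w).toList = (σ (y ++ w.toList)).drop y.length := by
  have h : ((σ (y ++ w.toList)).drop y.length).length = n := by simp [hσ.1]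
  rw [localMap]
  -- `rw [dif_pos h]` fails: the branch `⟨_, h⟩` is typed as a subtype, not as `List.Vector`
  exact (dif_pos h).symm ▸ rfl

lemma localMap_injective (hσ : IsTreeAut d σ) (y : List (Fin d)) :
    Function.Injective (localMap d n σ y) := by
  intro w w' h
  have h' := congrArg List.Vector.toList h
  rw [localMap_toList hσ, localMap_toList hσ] at h'
  refine List.Vector.toList_injective (List.append_cancel_left (as := y) (σ.injective ?_))
  rw [hσ.apply_append, h', ← hσ.apply_append]

lemma localMap_bijective (hσ : IsTreeAut d σ) (y : List (Fin d)) :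
    Function.Bijective (localMap d n σ y) :=
  Finite.injective_iff_bijective.mp (localMap_injective hσ y)

lemma localMap_mul (hσ : IsTreeAut d σ) (hτ : IsTreeAut d τ) (y : List (Fin d)) :
    localMap d n (σ * τ) y = localMap d n σ (τ y) ∘ localMap d n τ y := by
  funext w
  apply List.Vector.toList_injective
  rw [localMap_toList (hσ.mul hτ), Function.comp_apply, localMap_toList hσ,
    localMap_toList hτ, ← hτ.apply_append, hτ.1, Equiv.Perm.mul_apply]

lemma sgn_mul (hσ : IsTreeAut d σ) (hτ : IsTreeAut d τ) (y : List (Fin d)) :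
    sgn d n (σ * τ) y = sgn d n σ (τ y) * sgn d n τ y := by
  have hστ := localMap_bijective (n := n) (hσ.mul hτ) y
  rw [sgn, dif_pos hστ, sgn, dif_pos (localMap_bijective hσ _), sgn,
    dif_pos (localMap_bijective hτ _), ← map_mul]
  congr 1
  ext w
  simp [localMap_mul hσ hτ]

end TreeAut

theorem Qtilde_isSubgroup_general (ℓ : ℕ) :
    ∃ H : Subgroup (Equiv.Perm (List (Fin 3))),
      (H : Set (Equiv.Perm (List (Fin 3)))) =
        {σ | IsTreeAut 3 σ ∧ ∀ y : List (Fin 3),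
          sgn 3 ℓ σ y * sgn 3 (ℓ - 1) σ y =
            sgn 3 ℓ σ [] * sgn 3 (ℓ - 1) σ []} :=
  ⟨cocycleConstSubgroup (treeAut 3) (fun σ y => sgn 3 ℓ σ y * sgn 3 (ℓ - 1) σ y) []
    (fun σ hσ τ hτ y => by
      rw [sgn_mul hσ hτ, sgn_mul hσ hτ]
      exact mul_mul_mul_comm _ _ _ _)
    (fun _ => IsTreeAut.apply_nil), rfl⟩

/-- for a fixed labeling of `T_{3,∞}` and `ℓ ≥ 2`, the set
`Q̃_{ℓ,∞}` of tree automorphisms `σ` such that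
`sgn_ℓ(σ,y)·sgn_{ℓ-1}(σ,y) = sgn_ℓ(σ,x₀)·sgn_{ℓ-1}(σ,x₀)` for every node `y`
(where the root `x₀` has the empty label) is a subgroup of `Aut(T_{3,∞})`. -/
theorem Qtilde_isSubgroup (ℓ : ℕ) (hℓ : 2 ≤ ℓ) :
    ∃ H : Subgroup (Equiv.Perm (List (Fin 3))),
      (H : Set (Equiv.Perm (List (Fin 3)))) =
        {σ | IsTreeAut 3 σ ∧ ∀ y : List (Fin 3),
          sgn 3 ℓ σ y * sgn 3 (ℓ - 1) σ y =
            sgn 3 ℓ σ [] * sgn 3 (ℓ - 1) σ []} :=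
  Qtilde_isSubgroup_general ℓ

end Arboreal
end

section
/- Let K be a field with char K ∉ {2,3} and f ∈ K[z] a cubic polynomial whose two finite critical points γ_1, γ_2 ∈ K̄ collide at the ℓ-th iterate for some ℓ ≥ 2 (i.e. f^ℓ(γ_1) = f^ℓ(γ_2) but f^{ℓ−1}(γ_1) ≠ f^{ℓ−1}(γ_2)). Then the common value f^ℓ(γ_1) = f^ℓ(γ_2) lies in K. -/
/-!
Every `K`-automorphism `σ` of `K̄` permutes the roots `γ₁, γ₂` of `f'` and commutes with `f`, so
`σ (f^ℓ γ₁)` is `f^ℓ γ₁` or `f^ℓ γ₂`, which coincide. Since `f'` has distinct roots, `γ₁` is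
separable over `K`, hence so is the polynomial expression `f^ℓ γ₁`; a separable element fixed by
the whole Galois group lies in `K`.
-/

open Polynomial

theorem apply_iterate_aeval {R A F : Type*} [CommSemiring R] [CommSemiring A] [Algebra R A]
    [FunLike F A A] [AlgHomClass F R A A] (σ : F) (p : R[X]) (n : ℕ) (x : A) :
    σ ((fun y => aeval y p)^[n] x) = (fun y => aeval y p)^[n] (σ x) :=
  Function.Semiconj.iterate_right (fun y => (aeval_algHom_apply σ y p).symm) n x

theorem Subalgebra.iterate_aeval_mem {R A : Type*} [CommSemiring R] [CommSemiring A]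
    [Algebra R A] (S : Subalgebra R A) (p : R[X]) (n : ℕ) {x : A} (hx : x ∈ S) :
    (fun y => aeval y p)^[n] x ∈ S :=
  Set.MapsTo.iterate (f := fun y => aeval y p) (s := (S : Set A)) (fun y hy => by
    change aeval ((⟨y, hy⟩ : S) : A) p ∈ S
    exact aeval_coe S _ p ▸ SetLike.coe_mem _) n hx

theorem isSeparable_iterate_aeval {K L : Type*} [Field K] [Field L] [Algebra K L] (p : K[X])
    (n : ℕ) {x : L} (hx : IsSeparable K x) : IsSeparable K ((fun y => aeval y p)^[n] x) :=
  mem_separableClosure_iff.1 <|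
    (separableClosure K L).toSubalgebra.iterate_aeval_mem p n (mem_separableClosure_iff.2 hx)

theorem mem_range_algebraMap_of_isSeparable_of_forall_fixed {K L : Type*} [Field K] [Field L]
    [Algebra K L] [Normal K L] {x : L} (hx : IsSeparable K x) (hfix : ∀ σ : Gal(L/K), σ x = x) :
    x ∈ (algebraMap K L).range := by
  classical
  have hroots : ∀ y ∈ (minpoly K x).rootSet L, y = x := fun y hy => by
    obtain ⟨σ, rfl⟩ := minpoly.exists_algEquiv_of_root' hx.isIntegral.isAlgebraic
      (mem_rootSet.1 hy).2
    exact hfix σ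
  have hle : (minpoly K x).natDegree ≤ 1 := by
    rw [← card_rootSet_eq_natDegree hx (Normal.splits ‹_› x)]
    exact Fintype.card_le_one_iff.2 fun y z =>
      Subtype.ext ((hroots y y.2).trans (hroots z z.2).symm)
  exact minpoly.natDegree_eq_one_iff.1 (le_antisymm hle (minpoly.natDegree_pos hx.isIntegral))

section QuadraticFactorization

variable {K L : Type*} [Field K] [Field L] [Algebra K L] {g : K[X]} {a γ₁ γ₂ : L}

theorem aeval_eq_zero_iff_of_map_eq (ha : a ≠ 0)
    (hg : g.map (algebraMap K L) = C a * (X - C γ₁) * (X - C γ₂)) (y : L) :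
    aeval y g = 0 ↔ y = γ₁ ∨ y = γ₂ := by
  rw [aeval_def, ← eval_map, hg]
  simp [ha, sub_eq_zero]

theorem isSeparable_of_map_eq (ha : a ≠ 0) (hne : γ₁ ≠ γ₂)
    (hg : g.map (algebraMap K L) = C a * (X - C γ₁) * (X - C γ₂)) : IsSeparable K γ₁ := by
  have hsep : g.Separable := by
    rw [← separable_map (algebraMap K L), hg, mul_assoc]
    exact Separable.unit_mul (isUnit_C.2 ha.isUnit) <| separable_X_sub_C.mul separable_X_sub_C
      (isCoprime_X_sub_C_of_isUnit_sub (sub_ne_zero.2 hne).isUnit)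
  exact hsep.of_dvd (minpoly.dvd K γ₁ ((aeval_eq_zero_iff_of_map_eq ha hg γ₁).2 (Or.inl rfl)))

end QuadraticFactorization

theorem critical_value_rational_general {K : Type*} [Field K]
    (f : Polynomial K)
    (γ₁ γ₂ a : AlgebraicClosure K) (ha : a ≠ 0)
    (hder : (derivative f).map (algebraMap K (AlgebraicClosure K)) =
      C a * (X - C γ₁) * (X - C γ₂))
    (ℓ : ℕ)
    (hcol : (fun x => aeval x f)^[ℓ] γ₁ = (fun x => aeval x f)^[ℓ] γ₂)
    (hncol : (fun x => aeval x f)^[ℓ - 1] γ₁ ≠ (fun x => aeval x f)^[ℓ - 1] γ₂) :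
    ∃ b : K, algebraMap K (AlgebraicClosure K) b = (fun x => aeval x f)^[ℓ] γ₁ := by
  have hne : γ₁ ≠ γ₂ := fun h => hncol (by rw [h])
  have hcrit := aeval_eq_zero_iff_of_map_eq ha hder
  have hsep := isSeparable_iterate_aeval f ℓ (isSeparable_of_map_eq ha hne hder)
  refine mem_range_algebraMap_of_isSeparable_of_forall_fixed hsep fun σ => ?_
  have hσ : aeval (σ γ₁) (derivative f) = 0 := by
    rw [aeval_algHom_apply, (hcrit γ₁).2 (Or.inl rfl), map_zero]
  rw [apply_iterate_aeval]
  rcases (hcrit (σ γ₁)).1 hσ with h | h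
  · rw [h]
  · rw [h, hcol]

/-- Let `K` be a field with `char K ∉ {2,3}` and `f ∈ K[z]` a
cubic polynomial whose two finite critical points `γ₁, γ₂` (the roots of `f'`
in an algebraic closure) collide at the `ℓ`-th iterate for some `ℓ ≥ 2`, i.e.
`f^ℓ(γ₁) = f^ℓ(γ₂)` but `f^{ℓ-1}(γ₁) ≠ f^{ℓ-1}(γ₂)`. Then the common value
`f^ℓ(γ₁) = f^ℓ(γ₂)` is `K`-rational. -/
theorem critical_value_rational {K : Type*} [Field K]
    (h2 : (2 : K) ≠ 0) (h3 : (3 : K) ≠ 0)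
    (f : Polynomial K) (hdeg : f.natDegree = 3)
    (γ₁ γ₂ a : AlgebraicClosure K) (ha : a ≠ 0)
    (hder : (derivative f).map (algebraMap K (AlgebraicClosure K)) =
      C a * (X - C γ₁) * (X - C γ₂))
    (ℓ : ℕ) (hℓ : 2 ≤ ℓ)
    (hcol : (fun x => aeval x f)^[ℓ] γ₁ = (fun x => aeval x f)^[ℓ] γ₂)
    (hncol : (fun x => aeval x f)^[ℓ - 1] γ₁ ≠ (fun x => aeval x f)^[ℓ - 1] γ₂) :
    ∃ b : K, algebraMap K (AlgebraicClosure K) b = (fun x => aeval x f)^[ℓ] γ₁ :=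
  critical_value_rational_general f γ₁ γ₂ a ha hder ℓ hcol hncol
end

section
/- Let K be a field with char K ≠ 3 and f ∈ K[z] a cubic polynomial. Then f is conjugate over K (by an affine map z ↦ αz + β, α ∈ K^×, β ∈ K) to a polynomial of the form Az³ + Bz + 1 or of the form Az³ + Bz, but not to polynomials of both forms. -/
open Polynomial

/-- `g` is conjugate to `f` over `K` by the affine map `φ(z) = αz + β`
(with `α ∈ K^×`), i.e. `g = φ⁻¹ ∘ f ∘ φ`, expressed as `φ ∘ g = f ∘ φ`:
`α·g(z) + β = f(αz + β)` as polynomials. -/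
def AffineConj {K : Type*} [Field K] (f g : Polynomial K) : Prop :=
  ∃ α β : K, α ≠ 0 ∧ C α * g + C β = f.comp (C α * X + C β)

/-- Affine conjugacy is symmetric. -/
lemma affineConj_symm {K : Type*} [Field K] {f g : Polynomial K}
    (h : AffineConj f g) : AffineConj g f := by
  obtain ⟨α, β, hα, h⟩ := h
  refine ⟨α⁻¹, -β/α, inv_ne_zero hα, ?_⟩
  have h2 := congrArg (fun p => p.comp (C α⁻¹ * X + C (-β/α))) h
  simp only [add_comp, mul_comp, C_comp, X_comp, comp_assoc] at h2
  have key : C α * (C α⁻¹ * X + C (-β/α)) + C β = X := by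
    rw [mul_add, ← mul_assoc, ← C_mul, ← C_mul, mul_inv_cancel₀ hα]
    rw [show α * (-β/α) = -β by field_simp]
    simp
  rw [key, comp_X] at h2
  have this2 := congrArg (fun p => C α⁻¹ * p) h2
  simp only [mul_add, ← mul_assoc, ← C_mul, inv_mul_cancel₀ hα, C_1, one_mul] at this2
  have hc : C (-β/α : K) = -C (α⁻¹ * β) := by
    rw [show (-β/α : K) = -(α⁻¹ * β) by field_simp, map_neg]
  linear_combination hc - this2

/-- Affine conjugacy is transitive. -/
lemma affineConj_trans {K : Type*} [Field K] {f g h : Polynomial K}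
    (h1 : AffineConj f g) (h2 : AffineConj g h) : AffineConj f h := by
  obtain ⟨α₁, β₁, hα₁, e1⟩ := h1
  obtain ⟨α₂, β₂, hα₂, e2⟩ := h2
  refine ⟨α₁ * α₂, α₁ * β₂ + β₁, mul_ne_zero hα₁ hα₂, ?_⟩
  have e1' := congrArg (fun p => p.comp (C α₂ * X + C β₂)) e1
  simp only [add_comp, mul_comp, C_comp, X_comp, comp_assoc] at e1'
  have key : C α₁ * (C α₂ * X + C β₂) + C β₁ = C (α₁*α₂) * X + C (α₁*β₂+β₁) := by
    simp only [map_mul, map_add]; ring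
  rw [key] at e1'
  rw [← e1', ← e2]
  simp only [map_mul, map_add]; ring

/-- The two normal forms are never affinely conjugate when `A ≠ 0`. -/
lemma not_conj_forms {K : Type*} [Field K] (h3 : (3 : K) ≠ 0) {A B A' B' : K} (hA : A ≠ 0)
    (h : AffineConj (C A * X ^ 3 + C B * X + 1) (C A' * X ^ 3 + C B' * X)) : False := by
  obtain ⟨α, β, hα, h⟩ := h
  have expand : (C A * X ^ 3 + C B * X + 1 : K[X]).comp (C α * X + C β)
      = C (A*α^3) * X^3 + C (3*A*α^2*β) * X^2 + C (3*A*α*β^2 + B*α) * X + C (A*β^3 + B*β + 1) := by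
    simp only [add_comp, mul_comp, C_comp, X_comp, pow_comp, one_comp]
    simp only [map_one, map_mul, map_add, map_pow, map_ofNat]
    ring
  have lhs : C α * (C A' * X ^ 3 + C B' * X) + C β
      = C (α*A') * X^3 + C 0 * X^2 + C (α*B') * X + C β := by
    simp only [map_mul, map_zero]; ring
  rw [lhs, expand] at h
  have e2 := congrArg (fun p => Polynomial.coeff p 2) h
  have e0 := congrArg (fun p => Polynomial.coeff p 0) h
  simp only [coeff_add, coeff_C_mul, coeff_X_pow, coeff_X, coeff_C, coeff_one] at e2 e0
  norm_num at e2 e0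
  have hβ : β = 0 := by tauto
  rw [hβ] at e0
  simp at e0

/-- over a field of characteristic `≠ 3`, every cubic
polynomial is affinely conjugate over `K` to one of the forms `Az³ + Bz + 1`
or `Az³ + Bz`, but not to polynomials of both forms. -/
theorem normal_form_trichotomy {K : Type*} [Field K] (h3 : (3 : K) ≠ 0)
    (f : Polynomial K) (hdeg : f.natDegree = 3) :
    ((∃ A B : K, AffineConj f (C A * X ^ 3 + C B * X + 1)) ∨
      (∃ A B : K, AffineConj f (C A * X ^ 3 + C B * X))) ∧
    ¬((∃ A B : K, AffineConj f (C A * X ^ 3 + C B * X + 1)) ∧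
      (∃ A B : K, AffineConj f (C A * X ^ 3 + C B * X))) := by
  constructor
  · -- Existence
    have hf0 : f ≠ 0 := fun h => by simp [h] at hdeg
    have ha0 : f.coeff 3 ≠ 0 := by
      have := Polynomial.leadingCoeff_ne_zero.mpr hf0
      rwa [leadingCoeff, hdeg] at this
    obtain ⟨a, b, c, d, ha, hf⟩ :
        ∃ a b c d : K, a ≠ 0 ∧ f = C a * X^3 + C b * X^2 + C c * X + C d := by
      refine ⟨f.coeff 3, f.coeff 2, f.coeff 1, f.coeff 0, ha0, ?_⟩
      ext n
      rcases n with _|_|_|_|n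
      · simp
      · simp
      · simp
      · simp
      · rw [coeff_eq_zero_of_natDegree_lt (by omega)]
        simp [coeff_X_pow]
    obtain ⟨β, rfl⟩ : ∃ β : K, b = -(3*a*β) := by
      refine ⟨-b/(3*a), ?_⟩
      field_simp
    obtain ⟨e, rfl⟩ : ∃ e : K, d = e + 2*a*β^3 - c*β := ⟨d - 2*a*β^3 + c*β, by ring⟩
    by_cases hcase : e = β
    · right
      rw [hcase] at hf
      refine ⟨a, c - 3*a*β^2, 1, β, one_ne_zero, ?_⟩
      rw [hf]
      simp only [add_comp, mul_comp, C_comp, X_comp, pow_comp, one_comp]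
      simp only [map_one, map_mul, map_add, map_neg, map_sub, map_pow, map_ofNat]
      ring
    · left
      refine ⟨a*(e-β)^2, c - 3*a*β^2, e - β, β, sub_ne_zero.mpr hcase, ?_⟩
      rw [hf]
      simp only [add_comp, mul_comp, C_comp, X_comp, pow_comp, one_comp]
      simp only [map_one, map_mul, map_add, map_neg, map_sub, map_pow, map_ofNat]
      ring
  · -- Exclusivity
    rintro ⟨⟨A, B, hc1⟩, ⟨A', B', hc2⟩⟩
    have hA : A ≠ 0 := by
      intro h0
      obtain ⟨α, β, hα, h⟩ := hc1
      have hr : (C α * (C A * X^3 + C B * X + 1) + C β).natDegree = 3 := by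
        rw [h, natDegree_comp, hdeg, natDegree_linear hα, mul_one]
      rw [h0] at hr
      have hle : (C α * (C (0:K) * X^3 + C B * X + 1) + C β).natDegree ≤ 1 := by
        simp only [map_zero, zero_mul, zero_add]
        compute_degree
      omega
    exact not_conj_forms h3 hA (affineConj_trans (affineConj_symm hc1) hc2)
end

section
/- Let K be a field with char K ≠ 3. If a cubic polynomial f ∈ K[z] is affinely conjugate over K to A₁z³ + B₁z + 1 and also to A₂z³ + B₂z + 1, then A₁ = A₂ and B₁ = B₂. -/
/-!
Both normal forms `gᵢ = Aᵢz³ + Bᵢz + 1` are conjugate to `f`, hence to each other by an affine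
map `ψ(z) = az + b`.
In `a·g₂ + b = g₁ ∘ ψ` the `z²` coefficient is `3a²bA₁`, so `A₁b = 0` as `3 ≠ 0`. This removes
`b` from the `z` coefficient, giving `B₁ = B₂`; and either `A₁ = 0`, or `b = 0` and then the
constant term gives `a = 1`, so the `z³` coefficient gives `A₁ = A₂`.
-/

open Polynomial

namespace AffineConj

variable {K : Type*} [Field K] {f g h : K[X]}

theorem symm (hfg : AffineConj f g) : AffineConj g f := by
  obtain ⟨α, β, hα, e⟩ := hfg
  refine ⟨α⁻¹, -(α⁻¹ * β), inv_ne_zero hα, ?_⟩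
  have hinv : C α⁻¹ * C α = 1 := by rw [← C_mul, inv_mul_cancel₀ hα, C_1]
  have hβ : C (-(α⁻¹ * β)) = -(C α⁻¹ * C β) := by rw [map_neg, map_mul]
  set ψ := C α⁻¹ * X + C (-(α⁻¹ * β))
  have hφψ : (C α * X + C β).comp ψ = X := by
    simp only [ψ, add_comp, mul_comp, C_comp, X_comp, hβ]
    linear_combination (X - C β) * hinv
  have e' := congrArg (·.comp ψ) e
  simp only [comp_assoc, hφψ, comp_X, add_comp, mul_comp, C_comp] at e'
  rw [← e']
  linear_combination g.comp ψ * hinv + hβ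

theorem trans (hfg : AffineConj f g) (hgh : AffineConj g h) : AffineConj f h := by
  obtain ⟨α₁, β₁, hα₁, e₁⟩ := hfg
  obtain ⟨α₂, β₂, hα₂, e₂⟩ := hgh
  refine ⟨α₁ * α₂, α₁ * β₂ + β₁, mul_ne_zero hα₁ hα₂, ?_⟩
  have hφ : (C α₁ * X + C β₁).comp (C α₂ * X + C β₂)
      = C (α₁ * α₂) * X + C (α₁ * β₂ + β₁) := by
    simp only [add_comp, mul_comp, C_comp, X_comp, map_add, map_mul]
    ring
  rw [← hφ, ← comp_assoc, ← e₁]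
  simp only [add_comp, mul_comp, C_comp, ← e₂, map_add, map_mul]
  ring

end AffineConj

section NormalForm

variable {K : Type*} [Field K]

theorem normalForm_comp_affine (A B a b : K) :
    (C A * X ^ 3 + C B * X + 1).comp (C a * X + C b)
      = (⟨A * a ^ 3, 3 * A * a ^ 2 * b, 3 * A * a * b ^ 2 + B * a,
          A * b ^ 3 + B * b + 1⟩ : Cubic K).toPoly := by
  simp only [Cubic.toPoly, add_comp, mul_comp, C_comp, X_comp, one_comp, pow_comp,
    map_add, map_mul, map_pow, map_ofNat, map_one]
  ring

theorem affine_mul_normalForm (A B a b : K) :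
    C a * (C A * X ^ 3 + C B * X + 1) + C b
      = (⟨a * A, 0, a * B, a + b⟩ : Cubic K).toPoly := by
  simp only [Cubic.toPoly, map_add, map_mul, map_zero]
  ring

theorem eq_of_affineConj_normalForm (h3 : (3 : K) ≠ 0) {A₁ B₁ A₂ B₂ : K}
    (h : AffineConj (C A₁ * X ^ 3 + C B₁ * X + 1) (C A₂ * X ^ 3 + C B₂ * X + 1)) :
    A₁ = A₂ ∧ B₁ = B₂ := by
  obtain ⟨a, b, ha, e⟩ := h
  rw [normalForm_comp_affine, affine_mul_normalForm, Cubic.toPoly_injective] at e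
  obtain ⟨e₃, e₂, e₁, e₀⟩ := Cubic.mk.inj e
  have hAb : A₁ * b = 0 := by
    have : (3 * a ^ 2) * (A₁ * b) = 0 := by linear_combination -e₂
    exact (mul_eq_zero.mp this).resolve_left (mul_ne_zero h3 (pow_ne_zero 2 ha))
  have hB : B₁ = B₂ :=
    mul_left_cancel₀ ha (by linear_combination -e₁ - 3 * a * b * hAb)
  have hA : a ^ 2 * A₁ = A₁ := by
    rcases eq_or_ne A₁ 0 with hA₁ | hA₁
    · rw [hA₁, mul_zero]
    · have hb : b = 0 := (mul_eq_zero.mp hAb).resolve_left hA₁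
      subst hb
      have ha1 : a = 1 := by linear_combination e₀
      rw [ha1, one_pow, one_mul]
  exact ⟨mul_left_cancel₀ ha (by linear_combination -a * hA - e₃), hB⟩

end NormalForm

theorem normal_form_unique_general {K : Type*} [Field K] (h3 : (3 : K) ≠ 0)
    (f : Polynomial K) (A₁ B₁ A₂ B₂ : K)
    (hc1 : AffineConj f (C A₁ * X ^ 3 + C B₁ * X + 1))
    (hc2 : AffineConj f (C A₂ * X ^ 3 + C B₂ * X + 1)) :
    A₁ = A₂ ∧ B₁ = B₂ :=
  eq_of_affineConj_normalForm h3 (hc1.symm.trans hc2)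

/-- over a field of characteristic `≠ 3`, if a cubic
polynomial `f` is affinely conjugate over `K` to both `A₁z³ + B₁z + 1` and
`A₂z³ + B₂z + 1`, then `A₁ = A₂` and `B₁ = B₂`. -/
theorem normal_form_unique {K : Type*} [Field K] (h3 : (3 : K) ≠ 0)
    (f : Polynomial K) (hdeg : f.natDegree = 3) (A₁ B₁ A₂ B₂ : K)
    (hc1 : AffineConj f (C A₁ * X ^ 3 + C B₁ * X + 1))
    (hc2 : AffineConj f (C A₂ * X ^ 3 + C B₂ * X + 1)) :
    A₁ = A₂ ∧ B₁ = B₂ :=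
  normal_form_unique_general h3 f A₁ B₁ A₂ B₂ hc1 hc2
end

section
/- With f(z) = Az³ + Bz + 1, A ≠ 0, char K ∉ {2,3}, and F_n, G_n defined by f^n(γ) = F_nγ + G_n where γ² = −B/(3A): one has F_1 = 2B/3 and G_1 = 1, and the two critical points ±γ collide at iterate ℓ = 2 if and only if B ≠ 0 and 81A + 27B − 4B³ = 0. -/
/-- with `f(z) = Az³ + Bz + 1`, `A ≠ 0`, char `K ∉ {2,3}`,
and `Fₙ, Gₙ` defined by `f^n(γ) = Fₙγ + Gₙ` where `γ² = -B/(3A)` (and `γ ∉ K`):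
one has `F₁ = 2B/3` and `G₁ = 1`, and the two critical points `±γ` collide at
iterate `ℓ = 2` (i.e. `f²(γ) = f²(-γ)` and `f(γ) ≠ f(-γ)`) if and only if
`B ≠ 0` and `81A + 27B - 4B³ = 0`. -/
theorem collide_at_two_iff {K L : Type*} [Field K] [Field L] [Algebra K L]
    (h2 : (2 : K) ≠ 0) (h3 : (3 : K) ≠ 0)
    (A B : K) (hA : A ≠ 0) (γ : L) (hγK : γ ∉ Set.range (algebraMap K L))
    (hγ : 3 * algebraMap K L A * γ ^ 2 = -algebraMap K L B)
    (F G : ℕ → K) (hF0 : F 0 = 1) (hG0 : G 0 = 0)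
    (hFG : ∀ n : ℕ,
      (fun x => algebraMap K L A * x ^ 3 + algebraMap K L B * x + 1)^[n] γ =
        algebraMap K L (F n) * γ + algebraMap K L (G n)) :
    F 1 = 2 * B / 3 ∧ G 1 = 1 ∧
    (((fun x => algebraMap K L A * x ^ 3 + algebraMap K L B * x + 1)^[2] γ =
        (fun x => algebraMap K L A * x ^ 3 + algebraMap K L B * x + 1)^[2] (-γ) ∧
      (fun x => algebraMap K L A * x ^ 3 + algebraMap K L B * x + 1) γ ≠
        (fun x => algebraMap K L A * x ^ 3 + algebraMap K L B * x + 1) (-γ)) ↔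
      (B ≠ 0 ∧ 81 * A + 27 * B - 4 * B ^ 3 = 0)) := by
  set φ := algebraMap K L with hφdef
  have hinj : Function.Injective φ := (algebraMap K L).injective
  have h2L : (2 : L) ≠ 0 := by
    intro h; apply h2; apply hinj; rw [map_ofNat, map_zero]; simpa using h
  have h3L : (3 : L) ≠ 0 := by
    intro h; apply h3; apply hinj; rw [map_ofNat, map_zero]; simpa using h
  have h4L : (4 : L) ≠ 0 := by
    have h4 : (4 : L) = 2 ^ 2 := by norm_num
    rw [h4]; exact pow_ne_zero _ h2L
  have h81L : (81 : L) ≠ 0 := by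
    have h81 : (81 : L) = 3 ^ 4 := by norm_num
    rw [h81]; exact pow_ne_zero _ h3L
  have hγ0 : γ ≠ 0 := by
    intro h; exact hγK ⟨0, by simp [h]⟩
  have hAL : φ A ≠ 0 := fun h => hA (hinj (by simpa using h))
  have hB : B ≠ 0 := by
    intro hB0
    apply hγ0
    have h0 : 3 * φ A * γ ^ 2 = 0 := by rw [hγ, hB0, map_zero, neg_zero]
    have hsq : γ ^ 2 = 0 := by
      rcases mul_eq_zero.1 h0 with h | h
      · rcases mul_eq_zero.1 h with h' | h'
        · exact absurd h' h3L
        · exact absurd h' hAL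
      · exact h
    exact pow_eq_zero_iff (n := 2) (by norm_num) |>.1 hsq
  have hBL : φ B ≠ 0 := fun h => hB (hinj (by simpa using h))
  -- linear independence of 1, γ over K
  have indep : ∀ a b : K, φ a * γ + φ b = 0 → a = 0 ∧ b = 0 := by
    intro a b hab
    by_cases ha : a = 0
    · refine ⟨ha, ?_⟩
      rw [ha, map_zero, zero_mul, zero_add] at hab
      exact hinj (by simpa using hab)
    · exfalso
      have haL : φ a ≠ 0 := fun h => ha (hinj (by simpa using h))
      apply hγK
      refine ⟨-b / a, ?_⟩
      rw [map_div₀, map_neg]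
      field_simp
      linear_combination -hab
  -- the constant c = φ(2B/3) with 3c = 2 φ B
  set c : L := φ (2 * B / 3) with hcdef
  have hc3 : c * 3 = 2 * φ B := by
    have hk : (2 * B / 3) * 3 = 2 * B := div_mul_cancel₀ _ h3
    rw [hcdef, ← map_ofNat φ 3, ← map_mul, hk, map_mul, map_ofNat]
  have hc0 : c ≠ 0 := by
    rw [hcdef]
    intro h
    exact (div_ne_zero (mul_ne_zero h2 hB) h3) (hinj (by simpa using h))
  -- f(γ) and f(-γ)
  have hfγ : φ A * γ ^ 3 + φ B * γ + 1 = c * γ + 1 := by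
    refine mul_left_cancel₀ h3L ?_
    linear_combination γ * hγ - γ * hc3
  have hfnγ : φ A * (-γ) ^ 3 + φ B * (-γ) + 1 = -(c * γ) + 1 := by
    refine mul_left_cancel₀ h3L ?_
    linear_combination -γ * hγ + γ * hc3
  -- F 1 and G 1
  have hFG1 := hFG 1
  rw [Function.iterate_one] at hFG1
  have hF1G1 : F 1 = 2 * B / 3 ∧ G 1 = 1 := by
    have hz : φ (F 1 - 2 * B / 3) * γ + φ (G 1 - 1) = 0 := by
      rw [map_sub, map_sub, map_one, ← hcdef]
      linear_combination hfγ - hFG1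
    obtain ⟨ha, hb⟩ := indep _ _ hz
    exact ⟨sub_eq_zero.1 ha, sub_eq_zero.1 hb⟩
  refine ⟨hF1G1.1, hF1G1.2, ?_⟩
  have it2 : ∀ x : L, (fun x => φ A * x ^ 3 + φ B * x + 1)^[2] x =
      (fun x => φ A * x ^ 3 + φ B * x + 1) ((fun x => φ A * x ^ 3 + φ B * x + 1) x) := by
    intro x
    rw [Function.iterate_succ, Function.iterate_one]
    rfl
  have hEmap : φ (81 * A + 27 * B - 4 * B ^ 3) =
      81 * φ A + 27 * φ B - 4 * φ B ^ 3 := by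
    simp only [map_sub, map_add, map_mul, map_pow, map_ofNat]
  -- key identity: 81·(f²(γ) − f²(−γ)) = 4Bγ(81A + 27B − 4B³)
  have hdiff2 :
      81 * (fun x => φ A * x ^ 3 + φ B * x + 1)^[2] γ -
        81 * (fun x => φ A * x ^ 3 + φ B * x + 1)^[2] (-γ) =
      4 * φ B * γ * φ (81 * A + 27 * B - 4 * B ^ 3) := by
    rw [it2 γ, it2 (-γ)]
    simp only
    rw [hfγ, hfnγ, hEmap]
    linear_combination
      (6 * φ A * γ ^ 3 * (9 * c ^ 2 + 6 * φ B * c + 4 * φ B ^ 2) + 162 * φ A * γ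
        + 54 * φ B * γ) * hc3 + (16 * φ B ^ 3 * γ) * hγ
  have hfne : (fun x => φ A * x ^ 3 + φ B * x + 1) γ ≠
      (fun x => φ A * x ^ 3 + φ B * x + 1) (-γ) := by
    simp only
    rw [hfγ, hfnγ]
    intro h
    have h0 : 2 * (c * γ) = 0 := by linear_combination h
    rcases mul_eq_zero.1 h0 with h' | h'
    · exact h2L h'
    rcases mul_eq_zero.1 h' with h'' | h''
    · exact hc0 h''
    · exact hγ0 h''
  constructor
  · rintro ⟨heq, -⟩
    refine ⟨hB, ?_⟩
    have h0 : 4 * φ B * γ * φ (81 * A + 27 * B - 4 * B ^ 3) = 0 := by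
      rw [← hdiff2, heq, sub_self]
    have hE : φ (81 * A + 27 * B - 4 * B ^ 3) = 0 := by
      rcases mul_eq_zero.1 h0 with h' | h'
      · exfalso
        rcases mul_eq_zero.1 h' with h'' | h''
        · rcases mul_eq_zero.1 h'' with h4' | h4'
          · exact h4L h4'
          · exact hBL h4'
        · exact hγ0 h''
      · exact h'
    exact hinj (by simpa using hE)
  · rintro ⟨-, hE⟩
    refine ⟨?_, hfne⟩
    have hE0 : φ (81 * A + 27 * B - 4 * B ^ 3) = 0 := by rw [hE, map_zero]
    have h0 : 81 * ((fun x => φ A * x ^ 3 + φ B * x + 1)^[2] γ -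
        (fun x => φ A * x ^ 3 + φ B * x + 1)^[2] (-γ)) = 0 := by
      rw [mul_sub, hdiff2, hE0, mul_zero]
    have := (mul_eq_zero.1 h0).resolve_left h81L
    exact sub_eq_zero.1 this
end

section
/- The critical points ±γ of f(z) = Az³ + Bz + 1 collide at the ℓ-th iterate if and only if F_{ℓ−1} ≠ 0 and 9A·G_{ℓ−1}² + 3B = B·F_{ℓ−1}², where F_n, G_n are defined by f^n(γ) = F_nγ + G_n. -/
/-- with `f(z) = Az³ + Bz + 1`, `A ≠ 0`, `B ≠ 0`,
char `K ∉ {2,3}`, critical points `±γ` (`γ² = -B/(3A)`, `γ ∉ K`), and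
`Fₙ, Gₙ ∈ K` defined by `f^n(γ) = Fₙγ + Gₙ`: the critical points collide at
the `ℓ`-th iterate (`f^ℓ(γ) = f^ℓ(-γ)` and `f^{ℓ-1}(γ) ≠ f^{ℓ-1}(-γ)`) if and
only if `F_{ℓ-1} ≠ 0` and `9A·G_{ℓ-1}² + 3B = B·F_{ℓ-1}²`. -/
theorem collide_iff_FG {K L : Type*} [Field K] [Field L] [Algebra K L]
    (h2 : (2 : K) ≠ 0) (h3 : (3 : K) ≠ 0)
    (A B : K) (hA : A ≠ 0) (hB : B ≠ 0)
    (γ : L) (hγK : γ ∉ Set.range (algebraMap K L))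
    (hγ : 3 * algebraMap K L A * γ ^ 2 = -algebraMap K L B)
    (F G : ℕ → K) (hF0 : F 0 = 1) (hG0 : G 0 = 0)
    (hFG : ∀ n : ℕ,
      (fun x => algebraMap K L A * x ^ 3 + algebraMap K L B * x + 1)^[n] γ =
        algebraMap K L (F n) * γ + algebraMap K L (G n))
    (ℓ : ℕ) (hℓ : 1 ≤ ℓ) :
    ((fun x => algebraMap K L A * x ^ 3 + algebraMap K L B * x + 1)^[ℓ] γ =
        (fun x => algebraMap K L A * x ^ 3 + algebraMap K L B * x + 1)^[ℓ] (-γ) ∧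
      (fun x => algebraMap K L A * x ^ 3 + algebraMap K L B * x + 1)^[ℓ - 1] γ ≠
        (fun x => algebraMap K L A * x ^ 3 + algebraMap K L B * x + 1)^[ℓ - 1] (-γ)) ↔
    (F (ℓ - 1) ≠ 0 ∧ 9 * A * G (ℓ - 1) ^ 2 + 3 * B = B * F (ℓ - 1) ^ 2) := by
  set φ := algebraMap K L with hφdef
  have hinj : Function.Injective φ := (algebraMap K L).injective
  have hmapne : ∀ a : K, a ≠ 0 → φ a ≠ 0 := fun a ha h =>
    ha (hinj (h.trans (map_zero φ).symm))
  -- independence of 1, γ over K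
  have hind : ∀ a b : K, φ a * γ + φ b = 0 → a = 0 ∧ b = 0 := by
    intro a b hab
    by_cases ha : a = 0
    · subst ha
      simp only [map_zero, zero_mul, zero_add] at hab
      exact ⟨rfl, hinj (hab.trans (map_zero φ).symm)⟩
    · exfalso
      apply hγK
      refine ⟨-b / a, ?_⟩
      rw [show algebraMap K L (-b / a) = φ (-b/a) from rfl, map_div₀, map_neg,
        div_eq_iff (hmapne a ha)]
      linear_combination -hab
  have huniq : ∀ a b c d : K, φ a * γ + φ b = φ c * γ + φ d → a = c ∧ b = d := by
    intro a b c d h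
    have h' := hind (a - c) (b - d) (by rw [map_sub, map_sub]; linear_combination h)
    exact ⟨sub_eq_zero.mp h'.1, sub_eq_zero.mp h'.2⟩
  -- the L-level recursion
  have h1 : ∀ n : ℕ,
      φ A * (φ (F n) * γ + φ (G n)) ^ 3 + φ B * (φ (F n) * γ + φ (G n)) + 1 =
        φ (F (n+1)) * γ + φ (G (n+1)) := by
    intro n
    have h := hFG (n+1)
    rw [Function.iterate_succ_apply', hFG n] at h
    exact h
  -- K-level recursions
  have hrec : ∀ n : ℕ, 3 * F (n+1) = F n * (9*A*(G n)^2 + 3*B - B*(F n)^2) ∧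
      3 * G (n+1) = 3*A*(G n)^3 - 3*B*(F n)^2*(G n) + 3*B*(G n) + 3 := by
    intro n
    apply huniq
    simp only [map_mul, map_add, map_sub, map_pow, map_ofNat, map_one]
    linear_combination (-3) * h1 n + ((φ (F n))^3*γ + 3*(φ (F n))^2*(φ (G n))) * hγ
  -- iterates at -γ
  have hFG' : ∀ n : ℕ,
      (fun x => φ A * x ^ 3 + φ B * x + 1)^[n] (-γ) = -(φ (F n)) * γ + φ (G n) := by
    intro n
    induction n with
    | zero => simp [hF0, hG0]
    | succ n ih =>
      rw [Function.iterate_succ_apply', ih]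
      have hG2 : φ (G (n+1)) = φ A * (φ (G n))^3 - φ B * (φ (F n))^2 * φ (G n)
          + φ B * φ (G n) + 1 := by
        have hGrec : G (n+1) = A*(G n)^3 - B*(F n)^2*(G n) + B*(G n) + 1 :=
          mul_left_cancel₀ h3 (by linear_combination (hrec n).2)
        rw [hGrec]
        simp only [map_mul, map_add, map_sub, map_pow, map_one]
      show φ A * (-(φ (F n)) * γ + φ (G n)) ^ 3 + φ B * (-(φ (F n)) * γ + φ (G n)) + 1
        = -(φ (F (n+1))) * γ + φ (G (n+1))
      linear_combination (-1) * h1 n - 2*hG2 + 2*(φ (F n))^2*(φ (G n)) * hγ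
  have hγ0 : γ ≠ 0 := by
    intro h
    apply hB
    apply hinj
    rw [map_zero]
    have := hγ
    rw [h] at this
    simpa using this.symm
  have h2L : (2 : L) ≠ 0 := by
    intro h
    apply h2
    apply hinj
    rw [map_ofNat, map_zero, h]
  -- collision at step n iff F n = 0
  have hcoll : ∀ n : ℕ,
      ((fun x => φ A * x ^ 3 + φ B * x + 1)^[n] γ =
        (fun x => φ A * x ^ 3 + φ B * x + 1)^[n] (-γ)) ↔ F n = 0 := by
    intro n
    rw [hFG n, hFG' n]
    constructor
    · intro h
      have : (2 : L) * φ (F n) * γ = 0 := by linear_combination h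
      rcases mul_eq_zero.mp this with h' | h'
      · rcases mul_eq_zero.mp h' with h'' | h''
        · exact absurd h'' h2L
        · exact hinj (h''.trans (map_zero φ).symm)
      · exact absurd h' hγ0
    · intro h
      rw [h, map_zero]
      ring
  obtain ⟨m, rfl⟩ : ∃ m, ℓ = m + 1 := ⟨ℓ - 1, (Nat.succ_pred_eq_of_pos hℓ).symm⟩
  simp only [Nat.add_sub_cancel]
  rw [hcoll (m+1), ne_eq, hcoll m]
  have hrecF := (hrec m).1
  constructor
  · rintro ⟨hz, hnz⟩
    refine ⟨hnz, ?_⟩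
    have : F m * (9*A*(G m)^2 + 3*B - B*(F m)^2) = 0 := by
      rw [← hrecF, hz]; ring
    rcases mul_eq_zero.mp this with h | h
    · exact absurd h hnz
    · linear_combination h
  · rintro ⟨hnz, heq⟩
    refine ⟨?_, hnz⟩
    have h30 : 3 * F (m+1) = 0 := by rw [hrecF]; linear_combination F m * heq
    rcases mul_eq_zero.mp h30 with h | h
    · exact absurd h h3
    · exact h
end

section
/- Let f(z) = Az³ + Bz + 1 ∈ K[z], A ≠ 0, char K ∉ {2,3}, with critical points ±γ colliding at iterate ℓ ≥ 2, and let x_0 ∈ K. Write f^{-1}(x_0) = {α_1, α_2, α_3} ⊆ K̄ (roots of f(z) − x_0, with multiplicity) and set E_{ℓ−1}(t) = (f^{ℓ−1}(γ) − t)(f^{ℓ−1}(−γ) − t). Then ∏_{i=1}^{3}(z − E_{ℓ−1}(α_i)) = z³ − s₁z² + s₂z − s₃, where s₁ = B/A + 12G_{ℓ−1}², s₂ = −(6/A)·G_{ℓ−1}·(f^ℓ(γ) − x_0), and s₃ = (1/A²)·(f^ℓ(γ) − x_0)². -/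
open Polynomial

/-- The map `z ↦ Az³ + Bz + 1` with `A, B ∈ K`, acting on an extension `L`. -/
noncomputable def cubicMap {K L : Type*} [Field K] [Field L] [Algebra K L]
    (A B : K) : L → L :=
  fun x => algebraMap K L A * x ^ 3 + algebraMap K L B * x + 1

/-- let `f(z) = Az³ + Bz + 1` (`A ≠ 0`, char `K ∉ {2,3}`)
with critical points `±γ` (`γ² = -B/(3A)`, `γ ∉ K`) colliding at iterate
`ℓ ≥ 2`, and `x₀ ∈ K`. Write `f⁻¹(x₀) = {α₁, α₂, α₃}` (the roots of
`f(z) - x₀`, with multiplicity) and `E_{ℓ-1}(t) = (f^{ℓ-1}(γ)-t)(f^{ℓ-1}(-γ)-t)`.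
Then `∏ᵢ (z - E_{ℓ-1}(αᵢ)) = z³ - s₁z² + s₂z - s₃` with
`s₁ = B/A + 12G_{ℓ-1}²`, `s₂ = -(6/A)·G_{ℓ-1}·(f^ℓ(γ) - x₀)`, and
`s₃ = (1/A²)·(f^ℓ(γ) - x₀)²`. -/
theorem resolvent_cubic {K L : Type*} [Field K] [Field L] [Algebra K L]
    (h2 : (2 : K) ≠ 0) (h3 : (3 : K) ≠ 0)
    (A B : K) (hA : A ≠ 0) (γ : L) (hγK : γ ∉ Set.range (algebraMap K L))
    (hγ : 3 * algebraMap K L A * γ ^ 2 = -algebraMap K L B)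
    (F G : ℕ → K) (hF0 : F 0 = 1) (hG0 : G 0 = 0)
    (hFG : ∀ n : ℕ, (cubicMap A B)^[n] γ =
      algebraMap K L (F n) * γ + algebraMap K L (G n))
    (ℓ : ℕ) (hℓ : 2 ≤ ℓ)
    (hcol : (cubicMap A B)^[ℓ] γ = (cubicMap A B (L := L))^[ℓ] (-γ))
    (hncol : (cubicMap A B)^[ℓ - 1] γ ≠ (cubicMap A B (L := L))^[ℓ - 1] (-γ))
    (x₀ : K) (α₁ α₂ α₃ : L)
    (hroots : C (algebraMap K L A) * ((X - C α₁) * (X - C α₂) * (X - C α₃)) =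
      C (algebraMap K L A) * X ^ 3 + C (algebraMap K L B) * X +
        C (algebraMap K L (1 - x₀))) :
    (X - C (((cubicMap A B)^[ℓ - 1] γ - α₁) * ((cubicMap A B)^[ℓ - 1] (-γ) - α₁))) *
      (X - C (((cubicMap A B)^[ℓ - 1] γ - α₂) * ((cubicMap A B)^[ℓ - 1] (-γ) - α₂))) *
      (X - C (((cubicMap A B)^[ℓ - 1] γ - α₃) * ((cubicMap A B)^[ℓ - 1] (-γ) - α₃))) =
    X ^ 3 - C (algebraMap K L (B / A + 12 * G (ℓ - 1) ^ 2)) * X ^ 2 +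
      C (algebraMap K L (-(6 / A) * G (ℓ - 1)) *
        ((cubicMap A B)^[ℓ] γ - algebraMap K L x₀)) * X -
      C (algebraMap K L (1 / A ^ 2) *
        ((cubicMap A B)^[ℓ] γ - algebraMap K L x₀) ^ 2) := by
  have hinj : Function.Injective (algebraMap K L) := (algebraMap K L).injective
  have h2L : (2 : L) ≠ 0 := by
    rw [show (2 : L) = algebraMap K L 2 from (map_ofNat _ 2).symm]
    exact (map_ne_zero_iff _ hinj).mpr h2
  have h3L : (3 : L) ≠ 0 := by
    rw [show (3 : L) = algebraMap K L 3 from (map_ofNat _ 3).symm]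
    exact (map_ne_zero_iff _ hinj).mpr h3
  have hA' : algebraMap K L A ≠ 0 := (map_ne_zero_iff _ hinj).mpr hA
  have hγ0 : γ ≠ 0 := fun h => hγK ⟨0, by simp [h]⟩
  -- key step formula (multiplied by 3 to stay division-free)
  have hstep3 : ∀ c d : L, 3 * cubicMap A B (c * γ + d) =
      (3 * c * algebraMap K L B - c ^ 3 * algebraMap K L B +
        9 * algebraMap K L A * c * d ^ 2) * γ +
      (3 * algebraMap K L A * d ^ 3 - 3 * algebraMap K L B * c ^ 2 * d +
        3 * algebraMap K L B * d + 3) := by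
    intro c d
    simp only [cubicMap]
    linear_combination (c ^ 3 * γ + 3 * c ^ 2 * d) * hγ
  -- linear independence of 1, γ over K
  have hind : ∀ c d : K, algebraMap K L c * γ + algebraMap K L d = 0 →
      algebraMap K L c = 0 ∧ algebraMap K L d = 0 := by
    intro c d h
    rcases eq_or_ne c 0 with hc | hc
    · refine ⟨by simp [hc], ?_⟩
      simpa [hc] using h
    · exfalso
      apply hγK
      refine ⟨-d / c, ?_⟩
      have hc' : algebraMap K L c ≠ 0 := (map_ne_zero_iff _ hinj).mpr hc
      rw [map_div₀, map_neg]
      field_simp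
      linear_combination -h
  -- iterates of -γ
  have hneg : ∀ n : ℕ, (cubicMap A B (L := L))^[n] (-γ) =
      -(algebraMap K L (F n) * γ) + algebraMap K L (G n) := by
    intro n
    induction n with
    | zero => simp [hF0, hG0]
    | succ n ih =>
      have h1 : 3 * cubicMap A B (algebraMap K L (F n) * γ + algebraMap K L (G n)) =
          3 * (algebraMap K L (F (n + 1)) * γ + algebraMap K L (G (n + 1))) := by
        rw [← hFG n, ← Function.iterate_succ_apply' (cubicMap A B (L := L)) n γ, hFG (n + 1)]
      rw [hstep3] at h1
      have h0 : algebraMap K L (3 * F n * B - (F n) ^ 3 * B + 9 * A * F n * (G n) ^ 2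
            - 3 * F (n + 1)) * γ +
          algebraMap K L (3 * A * (G n) ^ 3 - 3 * B * (F n) ^ 2 * (G n) + 3 * B * (G n)
            + 3 - 3 * G (n + 1)) = 0 := by
        simp only [map_add, map_sub, map_mul, map_pow, map_ofNat]
        linear_combination h1
      obtain ⟨hc0, hd0⟩ := hind _ _ h0
      simp only [map_add, map_sub, map_mul, map_pow, map_ofNat] at hc0 hd0
      refine mul_left_cancel₀ h3L ?_
      rw [Function.iterate_succ_apply', ih,
        show -(algebraMap K L (F n) * γ) + algebraMap K L (G n) =
          (-(algebraMap K L (F n))) * γ + algebraMap K L (G n) from by ring,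
        hstep3]
      linear_combination (-γ) * hc0 + hd0
  have hl1 : ℓ - 1 + 1 = ℓ := by omega
  have hm := hFG (ℓ - 1)
  have hm' := hneg (ℓ - 1)
  have hp : algebraMap K L (F (ℓ - 1)) ≠ 0 := by
    intro h
    apply hncol
    rw [hm, hm', h]
    ring
  -- the collision relation
  have hcol' : 3 * (cubicMap A B (L := L))^[ℓ] γ = 3 * (cubicMap A B (L := L))^[ℓ] (-γ) := by
    rw [hcol]
  rw [← hl1, Function.iterate_succ_apply', Function.iterate_succ_apply', hm, hm',
    show -(algebraMap K L (F (ℓ - 1)) * γ) + algebraMap K L (G (ℓ - 1)) =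
      (-(algebraMap K L (F (ℓ - 1)))) * γ + algebraMap K L (G (ℓ - 1)) from by ring,
    hstep3, hstep3] at hcol'
  have hφγ2 : (2 : L) * ((3 * algebraMap K L (F (ℓ - 1)) * algebraMap K L B
      - algebraMap K L (F (ℓ - 1)) ^ 3 * algebraMap K L B
      + 9 * algebraMap K L A * algebraMap K L (F (ℓ - 1)) * algebraMap K L (G (ℓ - 1)) ^ 2)
      * γ) = 0 := by
    linear_combination hcol'
  have hφγ : (3 * algebraMap K L (F (ℓ - 1)) * algebraMap K L B
      - algebraMap K L (F (ℓ - 1)) ^ 3 * algebraMap K L B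
      + 9 * algebraMap K L A * algebraMap K L (F (ℓ - 1)) * algebraMap K L (G (ℓ - 1)) ^ 2)
      * γ = 0 := by
    rcases mul_eq_zero.mp hφγ2 with h | h
    · exact absurd h h2L
    · exact h
  have hφ3 : 3 * algebraMap K L (F (ℓ - 1)) * algebraMap K L B
      - algebraMap K L (F (ℓ - 1)) ^ 3 * algebraMap K L B
      + 9 * algebraMap K L A * algebraMap K L (F (ℓ - 1)) * algebraMap K L (G (ℓ - 1)) ^ 2
      = 0 := by
    rcases mul_eq_zero.mp hφγ with h | h
    · exact h
    · exact absurd h hγ0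
  have hkey : algebraMap K L B * algebraMap K L (F (ℓ - 1)) ^ 2 =
      9 * algebraMap K L A * algebraMap K L (G (ℓ - 1)) ^ 2 + 3 * algebraMap K L B := by
    have h' : algebraMap K L (F (ℓ - 1)) *
        (3 * algebraMap K L B - algebraMap K L (F (ℓ - 1)) ^ 2 * algebraMap K L B
          + 9 * algebraMap K L A * algebraMap K L (G (ℓ - 1)) ^ 2) =
        algebraMap K L (F (ℓ - 1)) * 0 := by
      linear_combination hφ3
    have h'' := mul_left_cancel₀ hp h'
    linear_combination -h''
  -- value of the ℓ-th iterate
  have hfl : (cubicMap A B (L := L))^[ℓ] γ =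
      -(8 * algebraMap K L A * algebraMap K L (G (ℓ - 1)) ^ 3)
      - 2 * algebraMap K L B * algebraMap K L (G (ℓ - 1)) + 1 := by
    refine mul_left_cancel₀ h3L ?_
    conv_lhs => rw [← hl1, Function.iterate_succ_apply', hm]
    rw [hstep3]
    linear_combination γ * hφ3 + (-(3 * algebraMap K L (G (ℓ - 1)))) * hkey
  -- symmetric functions of the roots
  have hroots' : C (algebraMap K L A) * X ^ 3
      - C (algebraMap K L A * (α₁ + α₂ + α₃)) * X ^ 2
      + C (algebraMap K L A * (α₁ * α₂ + α₁ * α₃ + α₂ * α₃)) * X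
      - C (algebraMap K L A * (α₁ * α₂ * α₃))
      = C (algebraMap K L A) * X ^ 3 + C (algebraMap K L B) * X +
        C (algebraMap K L (1 - x₀)) := by
    rw [← hroots]
    simp only [map_mul, map_add]
    ring
  have hcoefs : ∀ u v w : L,
      C (algebraMap K L A) * X ^ 3 - C u * X ^ 2 + C v * X - C w =
        C (algebraMap K L A) * X ^ 3 + C (algebraMap K L B) * X +
          C (algebraMap K L (1 - x₀)) →
      u = 0 ∧ v = algebraMap K L B ∧ w = algebraMap K L x₀ - 1 := by
    intro u v w h
    have h2' := congrArg (fun P : Polynomial L => P.coeff 2) h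
    have h1' := congrArg (fun P : Polynomial L => P.coeff 1) h
    have h0' := congrArg (fun P : Polynomial L => P.coeff 0) h
    simp only [coeff_add, coeff_sub, coeff_C_mul, coeff_X_pow, coeff_C, coeff_X] at h2' h1' h0'
    norm_num at h2' h1' h0'
    exact ⟨by linear_combination h2', by linear_combination h1', by linear_combination -h0'⟩
  obtain ⟨hv0, hv1, hv2⟩ := hcoefs _ _ _ hroots'
  have hσsum : α₁ + α₂ + α₃ = 0 := by
    rcases mul_eq_zero.mp hv0 with h | h
    · exact absurd h hA'
    · exact h
  have hα3 : α₃ = -α₁ - α₂ := by linear_combination hσsum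
  subst hα3
  have hBeq : algebraMap K L B =
      algebraMap K L A * (α₁ * α₂ + α₁ * (-α₁ - α₂) + α₂ * (-α₁ - α₂)) := by
    linear_combination -hv1
  have hxeq : algebraMap K L x₀ = 1 + algebraMap K L A * (α₁ * α₂ * (-α₁ - α₂)) := by
    linear_combination -hv2
  have hγ2 := hγ
  have hkey2 := hkey
  rw [hBeq] at hγ2 hkey2
  -- γ² elimination
  have hpγ : algebraMap K L (F (ℓ - 1)) ^ 2 * γ ^ 2 =
      -(3 * algebraMap K L (G (ℓ - 1)) ^ 2)
      - (α₁ * α₂ + α₁ * (-α₁ - α₂) + α₂ * (-α₁ - α₂)) := by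
    refine mul_left_cancel₀ (mul_ne_zero h3L hA') ?_
    linear_combination algebraMap K L (F (ℓ - 1)) ^ 2 * hγ2 - hkey2
  have hE : ∀ α : L,
      (algebraMap K L (F (ℓ - 1)) * γ + algebraMap K L (G (ℓ - 1)) - α) *
      (-(algebraMap K L (F (ℓ - 1)) * γ) + algebraMap K L (G (ℓ - 1)) - α) =
      α ^ 2 - 2 * algebraMap K L (G (ℓ - 1)) * α + 4 * algebraMap K L (G (ℓ - 1)) ^ 2
        + (α₁ * α₂ + α₁ * (-α₁ - α₂) + α₂ * (-α₁ - α₂)) := by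
    intro α
    linear_combination -hpγ
  -- the three symmetric-function identities
  have hs1 : algebraMap K L (B / A + 12 * G (ℓ - 1) ^ 2) =
      ((cubicMap A B (L := L))^[ℓ - 1] γ - α₁) * ((cubicMap A B (L := L))^[ℓ - 1] (-γ) - α₁) +
      ((cubicMap A B (L := L))^[ℓ - 1] γ - α₂) * ((cubicMap A B (L := L))^[ℓ - 1] (-γ) - α₂) +
      ((cubicMap A B (L := L))^[ℓ - 1] γ - (-α₁ - α₂)) *
        ((cubicMap A B (L := L))^[ℓ - 1] (-γ) - (-α₁ - α₂)) := by
    rw [hm, hm']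
    simp only [hE]
    simp only [map_add, map_div₀, map_mul, map_pow, map_ofNat]
    rw [hBeq]
    field_simp
    ring
  have hs2 : algebraMap K L (-(6 / A) * G (ℓ - 1)) *
      ((cubicMap A B (L := L))^[ℓ] γ - algebraMap K L x₀) =
      (((cubicMap A B (L := L))^[ℓ - 1] γ - α₁) * ((cubicMap A B (L := L))^[ℓ - 1] (-γ) - α₁)) *
        (((cubicMap A B (L := L))^[ℓ - 1] γ - α₂) * ((cubicMap A B (L := L))^[ℓ - 1] (-γ) - α₂)) +
      (((cubicMap A B (L := L))^[ℓ - 1] γ - α₁) * ((cubicMap A B (L := L))^[ℓ - 1] (-γ) - α₁)) *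
        (((cubicMap A B (L := L))^[ℓ - 1] γ - (-α₁ - α₂)) *
          ((cubicMap A B (L := L))^[ℓ - 1] (-γ) - (-α₁ - α₂))) +
      (((cubicMap A B (L := L))^[ℓ - 1] γ - α₂) * ((cubicMap A B (L := L))^[ℓ - 1] (-γ) - α₂)) *
        (((cubicMap A B (L := L))^[ℓ - 1] γ - (-α₁ - α₂)) *
          ((cubicMap A B (L := L))^[ℓ - 1] (-γ) - (-α₁ - α₂))) := by
    rw [hfl, hm, hm']
    simp only [hE]
    simp only [map_mul, map_neg, map_div₀, map_ofNat]
    rw [hBeq, hxeq]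
    field_simp
    ring
  have hs3 : algebraMap K L (1 / A ^ 2) *
      ((cubicMap A B (L := L))^[ℓ] γ - algebraMap K L x₀) ^ 2 =
      (((cubicMap A B (L := L))^[ℓ - 1] γ - α₁) * ((cubicMap A B (L := L))^[ℓ - 1] (-γ) - α₁)) *
      ((((cubicMap A B (L := L))^[ℓ - 1] γ - α₂) * ((cubicMap A B (L := L))^[ℓ - 1] (-γ) - α₂)) *
        (((cubicMap A B (L := L))^[ℓ - 1] γ - (-α₁ - α₂)) *
          ((cubicMap A B (L := L))^[ℓ - 1] (-γ) - (-α₁ - α₂)))) := by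
    rw [hfl, hm, hm']
    simp only [hE]
    simp only [map_mul, map_one, map_div₀, map_pow]
    rw [hBeq, hxeq]
    field_simp
    ring
  rw [hs1, hs2, hs3]
  simp only [map_add, map_mul]
  ring
end

section
/- Let f ∈ K[z] be a cubic polynomial with lead coefficient A and finite critical points γ_1, γ_2 (roots of f′ with multiplicity), over a field K with char K ∉ {2,3}, and let x_0 ∈ K. Then for every n ≥ 1, Δ(f^n − x_0) = −3^{3^n}·A^{3^{2n−1}−1}·(Δ(f^{n−1} − x_0))³·(f^n(γ_1) − x_0)·(f^n(γ_2) − x_0), with the convention Δ(f^0 − x_0) = 1. -/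
/-!
The roots of `g ∘ f` are the fibres `f⁻¹(α)` over the roots `α` of `g`, and on the fibre
over `α` the chain rule gives `(g ∘ f)' = g'(α) · f'`. Writing `f' = d · A · ∏ (X - γ)` over
the critical points `γ`, the product of `f'` over the fibre `f⁻¹(α)` is
`d ^ d · A · ∏ (f(γ) - α)`, so the product of `(g ∘ f)'` over the roots of `g ∘ f` is
`(∏ g'(α)) ^ d · (d ^ d · A) ^ e · ∏ g(f(γ)) / lc(g) ^ (d - 1)`. Substituting this into
`disc` expresses `disc (g ∘ f)` through `disc g`; for `g = f^m - x₀` one has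
`lc(g) ^ (d - 1) = A ^ (d ^ m - 1)`, which gives the recursion.
-/

open Polynomial

/-- The `n`-th iterate of a polynomial under composition: `polyIter f n` is the
polynomial `f^n = f ∘ ⋯ ∘ f`, with `polyIter f 0 = X`. -/
noncomputable def polyIter {L : Type*} [Field L] (f : Polynomial L) : ℕ → Polynomial L
  | 0 => X
  | n + 1 => (polyIter f n).comp f

/-- The discriminant of a polynomial `g` over an algebraically closed field:
`Δ(g) = (-1)^(d(d-1)/2) · lc(g)^(d-2) · ∏_{g(β)=0} g'(β)`, which for
`g = lc·∏(z-βᵢ)` equals `lc^(2d-2)·∏_{i<j}(βᵢ-βⱼ)²`. Note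
`disc (X - C x₀) = 1`. -/
noncomputable def disc {L : Type*} [Field L] (g : Polynomial L) : L :=
  (-1) ^ (g.natDegree * (g.natDegree - 1) / 2) * g.leadingCoeff ^ (g.natDegree - 2) *
    (g.roots.map fun β => (derivative g).eval β).prod

theorem Nat.choose_two_mul (d e : ℕ) :
    (e * d).choose 2 = d.choose 2 * e ^ 2 + d * e.choose 2 := by
  simp only [Nat.choose_two_right]
  have hd : d * (d - 1) / 2 * 2 = d * (d - 1) :=
    Nat.div_mul_cancel (Nat.even_mul_pred_self d).two_dvd
  have he : e * (e - 1) / 2 * 2 = e * (e - 1) :=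
    Nat.div_mul_cancel (Nat.even_mul_pred_self e).two_dvd
  refine Nat.div_eq_of_eq_mul_left two_pos ?_
  calc e * d * (e * d - 1) = d * (d - 1) * e ^ 2 + d * (e * (e - 1)) := by
        rcases Nat.eq_zero_or_pos d with rfl | hd0
        · simp
        rcases Nat.eq_zero_or_pos e with rfl | he0
        · simp
        zify [hd0, he0, Nat.mul_pos he0 hd0]
        ring
    _ = d * (d - 1) / 2 * 2 * e ^ 2 + d * (e * (e - 1) / 2 * 2) := by rw [hd, he]
    _ = _ := by ring

theorem Polynomial.leadingCoeff_sub_C_of_natDegree_pos {R : Type*} [Ring R] {p : R[X]}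
    (hp : 0 < p.natDegree) (a : R) : (p - C a).leadingCoeff = p.leadingCoeff :=
  leadingCoeff_sub_of_degree_lt (degree_C_le.trans_lt (natDegree_pos_iff_degree_pos.mp hp))

section
variable {L : Type*} [Field L] [IsAlgClosed L]

theorem roots_comp_eq_bind {f g : L[X]} (hf : 0 < f.natDegree) (hg : g ≠ 0) :
    (g.comp f).roots = g.roots.bind fun α => (f - C α).roots := by
  conv_lhs => rw [(IsAlgClosed.splits g).eq_prod_roots]
  rw [mul_comp, C_comp, multiset_prod_comp, Multiset.map_map,
    roots_C_mul _ (leadingCoeff_ne_zero.2 hg), roots_multiset_prod, Multiset.bind_map]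
  · simp [sub_comp]
  · simp only [Multiset.mem_map, Function.comp_apply, sub_comp, X_comp, C_comp, not_exists,
      not_and]
    intro α _ h
    have := natDegree_sub_C (p := f) (a := α)
    rw [h, natDegree_zero] at this
    omega

theorem prod_derivative_eval_roots_comp {f g : L[X]} (hf : 0 < f.natDegree) (hg : g ≠ 0) :
    ((g.comp f).roots.map fun β => (derivative (g.comp f)).eval β).prod =
      (g.roots.map fun α => (derivative g).eval α).prod ^ f.natDegree *
        (g.roots.map fun α => ((f - C α).roots.map fun β => (derivative f).eval β).prod).prod := by
  rw [roots_comp_eq_bind hf hg, Multiset.map_bind, Multiset.prod_bind, ← Multiset.prod_map_pow,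
    ← Multiset.prod_map_mul]
  refine congrArg _ (Multiset.map_congr rfl fun α _ => ?_)
  have hchain : ∀ β ∈ (f - C α).roots,
      (derivative (g.comp f)).eval β = (derivative g).eval α * (derivative f).eval β := by
    intro β hβ
    have hfβ : f.eval β = α := by simpa [sub_eq_zero] using isRoot_of_mem_roots hβ
    rw [derivative_comp, eval_mul, eval_comp, hfβ, mul_comm]
  rw [Multiset.map_congr rfl hchain, Multiset.prod_map_mul, Multiset.map_const',
    Multiset.prod_replicate, IsAlgClosed.card_roots_eq_natDegree, natDegree_sub_C]

theorem prod_derivative_eval_roots_sub_C {f : L[X]} {crit : Multiset L}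
    (hf' : derivative f = C (f.natDegree * f.leadingCoeff) * (crit.map fun γ => X - C γ).prod)
    (hcrit : Multiset.card crit + 1 = f.natDegree) (α : L) :
    ((f - C α).roots.map fun β => (derivative f).eval β).prod =
      (f.natDegree : L) ^ f.natDegree * f.leadingCoeff *
        (crit.map fun γ => f.eval γ - α).prod := by
  set fiber := (f - C α).roots
  have hcard : Multiset.card fiber = f.natDegree := by
    rw [IsAlgClosed.card_roots_eq_natDegree, natDegree_sub_C]
  have hvalue : ∀ γ, f.eval γ - α = f.leadingCoeff * (fiber.map fun β => γ - β).prod := by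
    intro γ
    rw [← leadingCoeff_sub_C_of_natDegree_pos (by omega) α,
      ← (IsAlgClosed.splits _).eval_eq_prod_roots]
    simp
  have hneg : ∀ γ, (fiber.map fun β => β - γ).prod =
      (-1) ^ f.natDegree * (fiber.map fun β => γ - β).prod := by
    intro γ
    rw [← hcard, ← Multiset.card_map (fun β => γ - β), ← Multiset.prod_map_neg,
      Multiset.map_map]
    simp
  simp only [hvalue, hf', eval_mul, eval_C, eval_multiset_prod, Multiset.map_map,
    Function.comp_apply, eval_sub, eval_X, Multiset.prod_map_mul, Multiset.map_const',
    Multiset.prod_replicate, hcard]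
  rw [Multiset.prod_map_prod_map, ← hcrit]
  simp only [hneg, Multiset.prod_map_mul, Multiset.map_const', Multiset.prod_replicate, ← hcrit]
  rw [← pow_mul, Even.neg_one_pow (by rw [mul_comm]; exact Nat.even_mul_succ_self _)]
  ring

/- For `natDegree g = 1` the exponent `natDegree g - 2` in `disc` truncates to `0`, so the
formula needs `g` monic there. -/
theorem disc_comp {f g : L[X]} {crit : Multiset L} (hf : 2 ≤ f.natDegree)
    (hf' : derivative f = C (f.natDegree * f.leadingCoeff) * (crit.map fun γ => X - C γ).prod)
    (hcrit : Multiset.card crit + 1 = f.natDegree) (hg : 2 ≤ g.natDegree ∨ g.Monic) :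
    disc (g.comp f) =
      (-1) ^ (f.natDegree * (f.natDegree - 1) / 2 * g.natDegree ^ 2) *
        (f.natDegree : L) ^ (f.natDegree * g.natDegree) * g.leadingCoeff ^ (f.natDegree - 1) *
        f.leadingCoeff ^ (g.natDegree * (f.natDegree * g.natDegree - 1)) * disc g ^ f.natDegree *
        (crit.map fun γ => (g.comp f).eval γ).prod := by
  have hg0 : g ≠ 0 := by
    rintro rfl
    simp [Monic] at hg
  have hvalue : (crit.map fun γ => (g.comp f).eval γ).prod =
      g.leadingCoeff ^ (f.natDegree - 1) *
        (g.roots.map fun α => (crit.map fun γ => f.eval γ - α).prod).prod := by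
    simp only [eval_comp, (IsAlgClosed.splits g).eval_eq_prod_roots, Multiset.prod_map_mul,
      Multiset.map_const', Multiset.prod_replicate, ← hcrit, Nat.add_sub_cancel]
    rw [Multiset.prod_map_prod_map]
  have hsign := Nat.choose_two_mul f.natDegree g.natDegree
  simp only [Nat.choose_two_right] at hsign
  have hlc : (g.leadingCoeff * f.leadingCoeff ^ g.natDegree) ^ (g.natDegree * f.natDegree - 2) *
      f.leadingCoeff ^ g.natDegree =
        g.leadingCoeff ^ (f.natDegree - 1) *
          f.leadingCoeff ^ (g.natDegree * (f.natDegree * g.natDegree - 1)) *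
          (g.leadingCoeff ^ (g.natDegree - 2)) ^ f.natDegree *
          g.leadingCoeff ^ (f.natDegree - 1) := by
    have hexpA : g.natDegree * (g.natDegree * f.natDegree - 2) + g.natDegree =
        g.natDegree * (f.natDegree * g.natDegree - 1) := by
      rcases Nat.eq_zero_or_pos g.natDegree with he | he
      · simp [he]
      have : 2 ≤ g.natDegree * f.natDegree := by nlinarith
      zify [this, show 1 ≤ f.natDegree * g.natDegree by nlinarith]
      ring
    have hc : g.leadingCoeff ^ (g.natDegree * f.natDegree - 2) =
        g.leadingCoeff ^ (f.natDegree - 1) * (g.leadingCoeff ^ (g.natDegree - 2)) ^ f.natDegree *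
          g.leadingCoeff ^ (f.natDegree - 1) := by
      rcases hg with he | hmonic
      · rw [← pow_mul, ← pow_add, ← pow_add]
        congr 1
        zify [show 2 ≤ g.natDegree * f.natDegree by nlinarith, he,
          show 1 ≤ f.natDegree by omega]
        ring
      · simp [hmonic.leadingCoeff]
    rw [mul_pow, ← pow_mul, mul_assoc, ← pow_add, hexpA, hc]
    ring
  simp only [disc]
  rw [natDegree_comp, leadingCoeff_comp (by omega),
    prod_derivative_eval_roots_comp (by omega) hg0,
    Multiset.map_congr rfl fun α _ => prod_derivative_eval_roots_sub_C hf' hcrit α,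
    Multiset.prod_map_mul, Multiset.map_const', Multiset.prod_replicate,
    IsAlgClosed.card_roots_eq_natDegree, hvalue, hsign, pow_add, pow_mul, pow_mul]
  linear_combination ((-1) ^ (f.natDegree * (f.natDegree - 1) / 2)) ^ g.natDegree ^ 2 *
    ((-1) ^ (g.natDegree * (g.natDegree - 1) / 2)) ^ f.natDegree *
    (g.roots.map fun α => (derivative g).eval α).prod ^ f.natDegree *
    (f.natDegree : L) ^ (f.natDegree * g.natDegree) *
    (g.roots.map fun α => (crit.map fun γ => f.eval γ - α).prod).prod * hlc
end

section polyIter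
variable {L : Type*} [Field L]

theorem polyIter_succ_sub_C (f : L[X]) (m : ℕ) (x₀ : L) :
    polyIter f (m + 1) - C x₀ = (polyIter f m - C x₀).comp f := by
  rw [polyIter, sub_comp, C_comp]

theorem natDegree_polyIter (f : L[X]) (m : ℕ) :
    (polyIter f m).natDegree = f.natDegree ^ m := by
  induction m with
  | zero => simp [polyIter]
  | succ m ih => rw [polyIter, natDegree_comp, ih, pow_succ]

theorem leadingCoeff_polyIter_sub_C_pow {f : L[X]} (hf : 0 < f.natDegree) (x₀ : L) (m : ℕ) :
    (polyIter f m - C x₀).leadingCoeff ^ (f.natDegree - 1) =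
      f.leadingCoeff ^ (f.natDegree ^ m - 1) := by
  induction m with
  | zero => simp [polyIter]
  | succ m ih =>
    rw [polyIter_succ_sub_C, leadingCoeff_comp hf.ne', mul_pow, ih, natDegree_sub_C,
      natDegree_polyIter, ← pow_mul, ← pow_add]
    congr 1
    have := Nat.one_le_pow m _ hf
    zify [this, hf, Nat.one_le_pow (m + 1) _ hf]
    ring

variable [IsAlgClosed L]

theorem disc_polyIter_succ_sub_C {f : L[X]} {crit : Multiset L} (hf : 2 ≤ f.natDegree)
    (hf' : derivative f = C (f.natDegree * f.leadingCoeff) * (crit.map fun γ => X - C γ).prod)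
    (hcrit : Multiset.card crit + 1 = f.natDegree) (x₀ : L) (m : ℕ) :
    disc (polyIter f (m + 1) - C x₀) =
      (-1) ^ (f.natDegree * (f.natDegree - 1) / 2 * f.natDegree ^ (2 * m)) *
        (f.natDegree : L) ^ f.natDegree ^ (m + 1) *
        f.leadingCoeff ^ (f.natDegree ^ (2 * m + 1) - 1) *
        disc (polyIter f m - C x₀) ^ f.natDegree *
        (crit.map fun γ => (polyIter f (m + 1)).eval γ - x₀).prod := by
  have hg : 2 ≤ (polyIter f m - C x₀).natDegree ∨ (polyIter f m - C x₀).Monic := by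
    rcases m with _ | m
    · exact Or.inr (monic_X_sub_C x₀)
    · left
      rw [natDegree_sub_C, natDegree_polyIter]
      exact hf.trans (Nat.le_self_pow m.succ_ne_zero _)
  rw [polyIter_succ_sub_C, disc_comp hf hf' hcrit hg, natDegree_sub_C, natDegree_polyIter,
    leadingCoeff_polyIter_sub_C_pow (by omega)]
  have hexp : f.natDegree ^ m - 1 + f.natDegree ^ m * (f.natDegree * f.natDegree ^ m - 1) =
      f.natDegree ^ (2 * m + 1) - 1 := by
    have := Nat.one_le_pow m _ (by omega : 0 < f.natDegree)
    zify [this, Nat.one_le_pow (2 * m + 1) _ (by omega : 0 < f.natDegree),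
      Nat.mul_le_mul (by omega : 1 ≤ f.natDegree) this]
    ring
  rw [← polyIter_succ_sub_C, ← hexp, pow_add]
  simp only [eval_sub, eval_C]
  ring
end polyIter

theorem iterated_discriminant_general {L : Type*} [Field L] [IsAlgClosed L]
    (f : Polynomial L) (hdeg : f.natDegree = 3)
    (A : L) (hA : f.leadingCoeff = A)
    (γ₁ γ₂ : L)
    (hder : derivative f = C (3 * A) * (X - C γ₁) * (X - C γ₂))
    (x₀ : L) :
    ∀ n : ℕ, 1 ≤ n →
      disc (polyIter f n - C x₀) =
        -(3 : L) ^ (3 ^ n) * A ^ (3 ^ (2 * n - 1) - 1) *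
          disc (polyIter f (n - 1) - C x₀) ^ 3 *
          ((polyIter f n).eval γ₁ - x₀) * ((polyIter f n).eval γ₂ - x₀) := by
  intro n hn
  obtain ⟨m, rfl⟩ := Nat.exists_eq_add_of_le' hn
  have hcrit : derivative f =
      C (f.natDegree * f.leadingCoeff) * (({γ₁, γ₂} : Multiset L).map fun γ => X - C γ).prod := by
    simp [hder, hdeg, hA, mul_assoc]
  have hsign : (-1 : L) ^ (3 * (3 - 1) / 2 * 3 ^ (2 * m)) = -1 :=
    Odd.neg_one_pow (Nat.odd_mul.2 ⟨by decide, Odd.pow (by decide)⟩)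
  rw [disc_polyIter_succ_sub_C (by omega) hcrit (by simp [hdeg]) x₀ m, hdeg, hA, hsign,
    show 2 * (m + 1) - 1 = 2 * m + 1 by omega, Nat.add_sub_cancel]
  simp only [Nat.cast_ofNat, Multiset.insert_eq_cons, Multiset.map_cons, Multiset.prod_cons,
    Multiset.map_singleton, Multiset.prod_singleton]
  ring

/-- let `f` be a cubic polynomial with lead coefficient `A`
and finite critical points `γ₁, γ₂` (roots of `f'` with multiplicity), over an
(algebraically closed) field of characteristic `∉ {2,3}`, and `x₀` a point.
Then for every `n ≥ 1`,
`Δ(f^n - x₀) = -3^(3^n)·A^(3^(2n-1)-1)·(Δ(f^(n-1) - x₀))³·(f^n(γ₁)-x₀)·(f^n(γ₂)-x₀)`,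
with the convention `Δ(f^0 - x₀) = Δ(X - x₀) = 1`. -/
theorem iterated_discriminant {L : Type*} [Field L] [IsAlgClosed L]
    (h2 : (2 : L) ≠ 0) (h3 : (3 : L) ≠ 0)
    (f : Polynomial L) (hdeg : f.natDegree = 3)
    (A : L) (hA : f.leadingCoeff = A)
    (γ₁ γ₂ : L)
    (hder : derivative f = C (3 * A) * (X - C γ₁) * (X - C γ₂))
    (x₀ : L) :
    ∀ n : ℕ, 1 ≤ n →
      disc (polyIter f n - C x₀) =
        -(3 : L) ^ (3 ^ n) * A ^ (3 ^ (2 * n - 1) - 1) *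
          disc (polyIter f (n - 1) - C x₀) ^ 3 *
          ((polyIter f n).eval γ₁ - x₀) * ((polyIter f n).eval γ₂ - x₀) :=
  iterated_discriminant_general f hdeg A hA γ₁ γ₂ hder x₀
end

section
/- Let f(z) = Az³ + Bz + 1 with A ≠ 0 over a field K, char K ∉ {2,3}, whose critical points collide at iterate ℓ ≥ 2, and let y ∈ K̄. Then Δ(f^ℓ − y)·Δ(f^{ℓ−1} − y) = −3·D² for some D ∈ K(y); explicitly one may take D = 3^{(3^ℓ−1)/2}·A^{(3^{2ℓ−1}−1)/2}·(Δ(f^{ℓ−1} − y))²·(f^ℓ(γ_1) − y), where γ_1 is a critical point of f. In particular, if Δ(f^ℓ − y)Δ(f^{ℓ−1} − y) ≠ 0, then √(−3) ∈ K(y)(√(Δ(f^ℓ−y)Δ(f^{ℓ−1}−y))). -/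
open Polynomial

section Aux

variable {L : Type*} [Field L] [IsAlgClosed L]

lemma my_card_roots_eq (p : L[X]) : p.roots.card = p.natDegree :=
  (splits_iff_card_roots).mp (IsAlgClosed.splits p)

lemma my_eq_prod (p : L[X]) :
    C p.leadingCoeff * (p.roots.map fun a => X - C a).prod = p :=
  C_leadingCoeff_mul_prod_multiset_X_sub_C (my_card_roots_eq p)

end Aux

/-- let `f(z) = Az³ + Bz + 1` (`A ≠ 0`, char `∉ {2,3}`)
with critical points `γ₁, γ₂` colliding at iterate `ℓ ≥ 2`, and `y` any point.
Then `Δ(f^ℓ - y)·Δ(f^{ℓ-1} - y) = -3·D²` where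
`D = 3^((3^ℓ-1)/2)·A^((3^(2ℓ-1)-1)/2)·(Δ(f^{ℓ-1} - y))²·(f^ℓ(γ₁) - y)`.
In particular, if the product of discriminants is nonzero, then for any square
root `s` of it, `(s/D)² = -3`, i.e. `√(-3)` lies in the field generated by `s`
over `K(y)`. -/
theorem disc_product_neg_three {L : Type*} [Field L] [IsAlgClosed L]
    (h2 : (2 : L) ≠ 0) (h3 : (3 : L) ≠ 0)
    (A B : L) (hA : A ≠ 0)
    (f : Polynomial L) (hf : f = C A * X ^ 3 + C B * X + 1)
    (γ₁ γ₂ : L)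
    (hder : derivative f = C (3 * A) * (X - C γ₁) * (X - C γ₂))
    (ℓ : ℕ) (hℓ : 2 ≤ ℓ)
    (hcol : (polyIter f ℓ).eval γ₁ = (polyIter f ℓ).eval γ₂)
    (hncol : (polyIter f (ℓ - 1)).eval γ₁ ≠ (polyIter f (ℓ - 1)).eval γ₂)
    (y : L) :
    disc (polyIter f ℓ - C y) * disc (polyIter f (ℓ - 1) - C y) =
      -3 * ((3 : L) ^ ((3 ^ ℓ - 1) / 2) * A ^ ((3 ^ (2 * ℓ - 1) - 1) / 2) *
        disc (polyIter f (ℓ - 1) - C y) ^ 2 * ((polyIter f ℓ).eval γ₁ - y)) ^ 2 ∧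
    (disc (polyIter f ℓ - C y) * disc (polyIter f (ℓ - 1) - C y) ≠ 0 →
      ∀ s : L, s ^ 2 = disc (polyIter f ℓ - C y) * disc (polyIter f (ℓ - 1) - C y) →
        (s / ((3 : L) ^ ((3 ^ ℓ - 1) / 2) * A ^ ((3 ^ (2 * ℓ - 1) - 1) / 2) *
          disc (polyIter f (ℓ - 1) - C y) ^ 2 *
          ((polyIter f ℓ).eval γ₁ - y))) ^ 2 = -3) := by
  have main : disc (polyIter f ℓ - C y) * disc (polyIter f (ℓ - 1) - C y) =
      -3 * ((3 : L) ^ ((3 ^ ℓ - 1) / 2) * A ^ ((3 ^ (2 * ℓ - 1) - 1) / 2) *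
        disc (polyIter f (ℓ - 1) - C y) ^ 2 * ((polyIter f ℓ).eval γ₁ - y)) ^ 2 := by
    -- basic facts about f
    have hd3 : f.natDegree = 3 := by rw [hf]; compute_degree!
    have hf0 : f ≠ 0 := fun h => by rw [h] at hd3; simp at hd3
    have hlcf : f.leadingCoeff = A := by
      rw [Polynomial.leadingCoeff, hd3, hf]
      simp [coeff_one]
    -- iterate degrees and leading coefficients
    have hiter : ∀ n : ℕ, (polyIter f n).natDegree = 3 ^ n ∧
        (polyIter f n).leadingCoeff = A ^ ((3 ^ n - 1) / 2) := by
      intro n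
      induction n with
      | zero => simp [polyIter]
      | succ n ih =>
        obtain ⟨h1, h2⟩ := ih
        constructor
        · rw [polyIter, natDegree_comp, h1, hd3, pow_succ]
        · rw [polyIter, leadingCoeff_comp (by rw [hd3]; norm_num), h1, h2, hlcf, ← pow_add]
          congr 1
          obtain ⟨t, ht⟩ : Odd (3 ^ n) := Odd.pow ⟨1, by norm_num⟩
          have h3s : (3 : ℕ) ^ (n + 1) = 3 * 3 ^ n := by rw [pow_succ]; ring
          omega
    -- replace ℓ by m + 1
    obtain ⟨m, rfl⟩ : ∃ m, ℓ = m + 1 := ⟨ℓ - 1, by omega⟩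
    have hm : 1 ≤ m := by omega
    simp only [Nat.add_sub_cancel] at hncol ⊢
    -- 3^m = 2s+3
    obtain ⟨s, hdm⟩ : ∃ s, 3 ^ m = 2 * s + 3 := by
      obtain ⟨t, ht⟩ : Odd (3 ^ m) := Odd.pow ⟨1, by norm_num⟩
      have h3m : 3 ≤ 3 ^ m := by
        calc (3 : ℕ) = 3 ^ 1 := (pow_one 3).symm
        _ ≤ 3 ^ m := Nat.pow_le_pow_right (by norm_num) hm
      exact ⟨t - 1, by omega⟩
    have hDm : 3 ^ (m + 1) = 6 * s + 9 := by rw [pow_succ, hdm]; ring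
    set g0 : L[X] := polyIter f m with hg0
    have hstep : polyIter f (m + 1) = g0.comp f := rfl
    have hgd : g0.natDegree = 3 ^ m := (hiter m).1
    have hglc' : g0.leadingCoeff = A ^ (s + 1) := by
      rw [(hiter m).2]; congr 1; omega
    have hg00 : g0 ≠ 0 := fun h => by rw [h] at hgd; simp at hgd; omega
    set q : L[X] := g0 - C y with hq
    have hqd : q.natDegree = 2 * s + 3 := by rw [hq, natDegree_sub_C, hgd, hdm]
    have hqlc : q.leadingCoeff = A ^ (s + 1) := by
      rw [hq, leadingCoeff_sub_of_degree_lt, hglc']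
      refine lt_of_le_of_lt degree_C_le ?_
      rw [degree_eq_natDegree hg00, hgd]
      exact_mod_cast Nat.pos_of_ne_zero (by omega)
    have hq0 : q ≠ 0 := fun h => by rw [h] at hqd; simp at hqd
    set R : Multiset L := q.roots with hR
    have hRcard : R.card = 2 * s + 3 := by rw [hR, my_card_roots_eq, hqd]
    have hqfact : C (A ^ (s + 1)) * (R.map fun a => X - C a).prod = q := by
      rw [hR, ← hqlc]; exact my_eq_prod q
    -- facts about f - C α
    have hfd : ∀ α : L, (f - C α).natDegree = 3 := fun α => by rw [natDegree_sub_C, hd3]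
    have hfne : ∀ α : L, f - C α ≠ 0 := by
      intro α h
      have := hfd α
      rw [h] at this
      simp at this
    have hflc : ∀ α : L, (f - C α).leadingCoeff = A := by
      intro α
      rw [leadingCoeff_sub_of_degree_lt, hlcf]
      refine lt_of_le_of_lt degree_C_le ?_
      rw [degree_eq_natDegree hf0, hd3]
      exact_mod_cast Nat.zero_lt_succ _
    have hfcard : ∀ α : L, (f - C α).roots.card = 3 := fun α => by
      rw [my_card_roots_eq, hfd]
    have hffact : ∀ α : L, C A * ((f - C α).roots.map fun a => X - C a).prod = f - C α := by
      intro α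
      conv_lhs => rw [← hflc α]
      exact my_eq_prod _
    -- Lemma A
    have lemA : ∀ α γ : L, A * (((f - C α).roots).map fun β => β - γ).prod = α - f.eval γ := by
      intro α γ
      have h1 : (f - C α).eval γ = A * (((f - C α).roots).map fun β => γ - β).prod := by
        conv_lhs => rw [← hffact α]
        rw [eval_mul, eval_C, eval_multiset_prod, Multiset.map_map]
        simp [Function.comp]
      have h2 : (((f - C α).roots).map fun β => β - γ).prod =
          -(((f - C α).roots).map fun β => γ - β).prod := by
        have hmm : (((f - C α).roots).map fun β => β - γ) =
            ((((f - C α).roots).map fun β => γ - β).map Neg.neg) := by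
          rw [Multiset.map_map]
          exact Multiset.map_congr rfl (fun x _ => by simp [Function.comp])
        rw [hmm, Multiset.prod_map_neg, Multiset.card_map, hfcard]
        ring
      have h3 : (f - C α).eval γ = f.eval γ - α := by simp
      rw [h3] at h1
      rw [h2, mul_neg, ← h1]
      ring
    -- Lemma B
    have lemB : ∀ α : L, (((f - C α).roots).map fun β => (derivative f).eval β).prod
        = 27 * A * ((α - f.eval γ₁) * (α - f.eval γ₂)) := by
      intro α
      have h1 : (((f - C α).roots).map fun β => (derivative f).eval β)
          = (((f - C α).roots).map fun β => (3 * A) * ((β - γ₁) * (β - γ₂))) :=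
        Multiset.map_congr rfl (fun β _ => by rw [hder]; simp; ring)
      rw [h1, Multiset.prod_map_mul, Multiset.map_const', Multiset.prod_replicate, hfcard,
        Multiset.prod_map_mul]
      have e1 := lemA α γ₁
      have e2 := lemA α γ₂
      calc (3 * A) ^ 3 * ((((f - C α).roots).map fun β => β - γ₁).prod *
              (((f - C α).roots).map fun β => β - γ₂).prod)
          = 27 * A * ((A * (((f - C α).roots).map fun β => β - γ₁).prod) *
              (A * (((f - C α).roots).map fun β => β - γ₂).prod)) := by ring
        _ = 27 * A * ((α - f.eval γ₁) * (α - f.eval γ₂)) := by rw [e1, e2]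
    -- composition
    have hGsub : polyIter f (m + 1) - C y = q.comp f := by
      rw [hstep, hq, sub_comp, C_comp]
    have hcompfact : q.comp f = C (A ^ (s + 1)) * (R.map fun α => f - C α).prod := by
      conv_lhs => rw [← hqfact]
      rw [mul_comp, C_comp, multiset_prod_comp, Multiset.map_map]
      congr 2
      exact Multiset.map_congr rfl (fun α _ => by simp [sub_comp])
    have h0notmem : (0 : L[X]) ∉ R.map fun α => f - C α := by
      intro h0
      obtain ⟨α, _, hα⟩ := Multiset.mem_map.mp h0
      exact hfne α hα
    have hrootsG : (polyIter f (m + 1) - C y).roots = R.bind fun α => (f - C α).roots := by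
      rw [hGsub, hcompfact, roots_C_mul _ (pow_ne_zero _ hA),
        roots_multiset_prod _ h0notmem, Multiset.bind_map]
    have hder' : derivative (polyIter f (m + 1) - C y) = derivative f * (derivative q).comp f := by
      rw [hGsub, derivative_comp]
    set P : L := (R.map fun α => (derivative q).eval α).prod with hP
    set u : L := (polyIter f (m + 1)).eval γ₁ - y with hu
    -- Lemma E
    have lemE : ∀ γ : L, A ^ (s + 1) * (R.map fun α => α - f.eval γ).prod
        = -((polyIter f (m + 1)).eval γ - y) := by
      intro γ
      have h1 : q.eval (f.eval γ) = A ^ (s + 1) * (R.map fun α => f.eval γ - α).prod := by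
        conv_lhs => rw [← hqfact]
        rw [eval_mul, eval_C, eval_multiset_prod, Multiset.map_map]
        simp [Function.comp]
      have h2 : (R.map fun α => α - f.eval γ).prod = -(R.map fun α => f.eval γ - α).prod := by
        have hmm : (R.map fun α => α - f.eval γ) =
            ((R.map fun α => f.eval γ - α).map Neg.neg) := by
          rw [Multiset.map_map]
          exact Multiset.map_congr rfl (fun x _ => by simp [Function.comp])
        rw [hmm, Multiset.prod_map_neg, Multiset.card_map, hRcard]
        have hodd : (-1 : L) ^ (2 * s + 3) = -1 := Odd.neg_one_pow ⟨s + 1, by ring⟩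
        rw [hodd]
        ring
      have h3 : q.eval (f.eval γ) = (polyIter f (m + 1)).eval γ - y := by
        rw [hq, eval_sub, eval_C, hstep, eval_comp]
      rw [h2, mul_neg, ← h1, h3]
    set QQ : L := ((polyIter f (m + 1) - C y).roots.map fun β =>
      (derivative (polyIter f (m + 1) - C y)).eval β).prod with hQQ
    -- the big product
    have hQmain : A ^ (2 * (s + 1)) * QQ = 3 ^ (6 * s + 9) * A ^ (2 * s + 3) * u ^ 2 * P ^ 3 := by
      rw [hQQ, hrootsG, Multiset.map_bind, Multiset.prod_bind]
      have hinner : ∀ α ∈ R, (((f - C α).roots).map fun β =>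
          (derivative (polyIter f (m + 1) - C y)).eval β).prod
          = (27 * A * ((α - f.eval γ₁) * (α - f.eval γ₂))) * ((derivative q).eval α) ^ 3 := by
        intro α hα
        have hmap : (((f - C α).roots).map fun β =>
            (derivative (polyIter f (m + 1) - C y)).eval β)
            = (((f - C α).roots).map fun β =>
              (derivative f).eval β * (derivative q).eval α) := by
          refine Multiset.map_congr rfl fun β hβ => ?_
          have hfβ : f.eval β = α := by
            have h0 := (mem_roots'.mp hβ).2
            have h0' : f.eval β - α = 0 := by simpa [IsRoot] using h0
            exact sub_eq_zero.mp h0'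
          rw [hder', eval_mul, eval_comp, hfβ]
        rw [hmap, Multiset.prod_map_mul, lemB α, Multiset.map_const',
          Multiset.prod_replicate, hfcard]
      rw [Multiset.map_congr rfl hinner, Multiset.prod_map_mul, Multiset.prod_map_mul,
        Multiset.map_const', Multiset.prod_replicate, hRcard, Multiset.prod_map_mul,
        Multiset.prod_map_pow]
      have e1 : A ^ (s + 1) * (R.map fun α => α - f.eval γ₁).prod = -u := by
        rw [lemE γ₁, hu]
      have e2 : A ^ (s + 1) * (R.map fun α => α - f.eval γ₂).prod = -u := by
        rw [lemE γ₂, ← hcol, hu]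
      have h27 : (27 : L) = 3 ^ 3 := by norm_num
      calc A ^ (2 * (s + 1)) * ((27 * A) ^ (2 * s + 3) *
              ((R.map fun α => α - f.eval γ₁).prod * (R.map fun α => α - f.eval γ₂).prod) *
              (R.map fun α => (derivative q).eval α).prod ^ 3)
          = (27 * A) ^ (2 * s + 3) *
              ((A ^ (s + 1) * (R.map fun α => α - f.eval γ₁).prod) *
               (A ^ (s + 1) * (R.map fun α => α - f.eval γ₂).prod)) * P ^ 3 := by
            rw [hP]; ring
        _ = (27 * A) ^ (2 * s + 3) * (-u * -u) * P ^ 3 := by rw [e1, e2]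
        _ = 3 ^ (6 * s + 9) * A ^ (2 * s + 3) * u ^ 2 * P ^ 3 := by
            rw [mul_pow, h27, ← pow_mul]
            ring_nf

    -- disc computations
    have hGdeg : (polyIter f (m + 1) - C y).natDegree = 6 * s + 9 := by
      rw [natDegree_sub_C, (hiter (m + 1)).1, hDm]
    have hGne : polyIter f (m + 1) ≠ 0 := fun h => by
      have := (hiter (m + 1)).1
      rw [h, natDegree_zero, hDm] at this
      omega
    have hGlc : (polyIter f (m + 1) - C y).leadingCoeff = A ^ (3 * s + 4) := by
      rw [leadingCoeff_sub_of_degree_lt, (hiter (m + 1)).2]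
      · congr 1; omega
      · refine lt_of_le_of_lt degree_C_le ?_
        rw [degree_eq_natDegree hGne, (hiter (m + 1)).1]
        exact_mod_cast Nat.pos_of_ne_zero (by positivity)
    set ε : L := (-1 : L) ^ ((6 * s + 9) * (3 * s + 4)) with hε
    set δ : L := (-1 : L) ^ ((2 * s + 3) * (s + 1)) with hδ
    have hsign : ε * δ = -1 := by
      rw [hε, hδ, ← pow_add]
      exact Odd.neg_one_pow ⟨10 * s ^ 2 + 28 * s + 19, by ring⟩
    have hδ2 : δ ^ 2 = 1 := by
      rw [hδ, ← pow_mul, mul_comm _ 2, pow_mul]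
      norm_num
    have hdiscq : disc q = δ * (A ^ (s + 1)) ^ (2 * s + 1) * P := by
      rw [disc, hqd, hqlc, ← hR, ← hP]
      have ha : (2 * s + 3) * (2 * s + 3 - 1) / 2 = (2 * s + 3) * (s + 1) := by
        have h' : 2 * s + 3 - 1 = 2 * (s + 1) := by omega
        rw [h', show (2 * s + 3) * (2 * (s + 1)) = (2 * s + 3) * (s + 1) * 2 from by ring,
          Nat.mul_div_cancel _ (by norm_num)]
      have hb : 2 * s + 3 - 2 = 2 * s + 1 := by omega
      rw [ha, hb, ← hδ]
    have hdiscG : disc (polyIter f (m + 1) - C y) = ε * (A ^ (3 * s + 4)) ^ (6 * s + 7) * QQ := by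
      rw [disc, hGdeg, hGlc, ← hQQ]
      have ha : (6 * s + 9) * (6 * s + 9 - 1) / 2 = (6 * s + 9) * (3 * s + 4) := by
        have h' : 6 * s + 9 - 1 = 2 * (3 * s + 4) := by omega
        rw [h', show (6 * s + 9) * (2 * (3 * s + 4)) = (6 * s + 9) * (3 * s + 4) * 2 from by ring,
          Nat.mul_div_cancel _ (by norm_num)]
      have hb : 6 * s + 9 - 2 = 6 * s + 7 := by omega
      rw [ha, hb, ← hε]
    have hdiscq2 : disc q ^ 2 = ((A ^ (s + 1)) ^ (2 * s + 1)) ^ 2 * P ^ 2 := by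
      rw [hdiscq, mul_pow, mul_pow, hδ2, one_mul]
    -- exponent rewrites in the goal
    have hge3 : (3 ^ (m + 1) - 1) / 2 = 3 * s + 4 := by omega
    have hgeA : (3 ^ (2 * (m + 1) - 1) - 1) / 2 = 6 * s ^ 2 + 18 * s + 13 := by
      have h1 : 2 * (m + 1) - 1 = m + (m + 1) := by omega
      rw [h1, pow_add, hdm, hDm]
      have h2 : (2 * s + 3) * (6 * s + 9) = 2 * (6 * s ^ 2 + 18 * s + 13) + 1 := by ring
      omega
    rw [hge3, hgeA, hdiscq2, hdiscG, hdiscq]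
    apply mul_right_cancel₀ (pow_ne_zero (2 * (s + 1)) hA)
    linear_combination (ε * δ * (A ^ (3 * s + 4)) ^ (6 * s + 7) * (A ^ (s + 1)) ^ (2 * s + 1) * P)
        * hQmain +
      ((A ^ (3 * s + 4)) ^ (6 * s + 7) * (A ^ (s + 1)) ^ (2 * s + 1) * P *
        (3 ^ (6 * s + 9) * A ^ (2 * s + 3) * u ^ 2 * P ^ 3)) * hsign
  refine ⟨main, fun hne s hs => ?_⟩
  set D : L := (3 : L) ^ ((3 ^ ℓ - 1) / 2) * A ^ ((3 ^ (2 * ℓ - 1) - 1) / 2) *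
    disc (polyIter f (ℓ - 1) - C y) ^ 2 * ((polyIter f ℓ).eval γ₁ - y) with hD
  have hD0 : D ≠ 0 := by
    intro h
    rw [main, h] at hne
    simp at hne
  rw [div_pow, hs, main]
  field_simp
end
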